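/- arXiv:1710.07885 — 3 statements merged into one kernel-verified Lean document; each statement's English description precedes it below -/
import Mathlib

section
/- For 1 ≤ k ≤ n with n ≥ 2k+3, the variance of the number of k-cycles of a uniformly random permutation π of {1,...,n} satisfying π(i) ≥ i - 1 (for i ∈ {2,...,n}) equals ((2^(k+1) - 2k + 3)·n + 3k(k-4) + (3-k)·2^(k+1) + 5) / 4^(k+1). -/
open Finset Equiv Equiv.Perm

variable {α : Type*} [Fintype α] [DecidableEq α]

/-- orbit of `x` under permutation `f` as a finset -/
def orbF (f : Perm α) (x : α) : Finset α := univ.filter (fun y => f.SameCycle x y)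

lemma mem_orbF {f : Perm α} {x y : α} : y ∈ orbF f x ↔ f.SameCycle x y := by
  simp [orbF]

lemma self_mem_orbF (f : Perm α) (x : α) : x ∈ orbF f x := mem_orbF.2 (SameCycle.refl f x)

lemma orbF_eq_of_sameCycle {f : Perm α} {x y : α} (h : f.SameCycle x y) :
    orbF f x = orbF f y := by
  ext z; simp only [mem_orbF]
  exact ⟨fun hz => h.symm.trans hz, fun hz => h.trans hz⟩

lemma sameCycle_iff_nat {f : Perm α} {x y : α} :
    f.SameCycle x y ↔ ∃ n : ℕ, (f ^ n) x = y := by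
  constructor
  · intro h
    obtain ⟨i, _, hi⟩ := h.exists_pow_eq'
    exact ⟨i, hi⟩
  · rintro ⟨n, rfl⟩
    exact ⟨(n : ℤ), by simp⟩

lemma orbF_of_fixed {f : Perm α} {x : α} (h : f x = x) : orbF f x = {x} := by
  ext z
  simp only [mem_orbF, Finset.mem_singleton]
  constructor
  · rintro ⟨i, hi⟩
    rw [zpow_apply_eq_self_of_apply_eq_self h] at hi
    exact hi.symm
  · rintro rfl; exact SameCycle.refl f _

/-- number of elements lying in cycles of length exactly `k` -/
def OC (f : Perm α) (k : ℕ) : ℕ := (univ.filter (fun x => (orbF f x).card = k)).card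

lemma OC_dvd (f : Perm α) (k : ℕ) : k ∣ OC f k := by
  classical
  set S := univ.filter (fun x => (orbF f x).card = k) with hS
  have hfib : S.card = ∑ B ∈ S.image (orbF f), (S.filter (fun x => orbF f x = B)).card :=
    Finset.card_eq_sum_card_fiberwise (fun x hx => Finset.mem_image_of_mem _ hx)
  have hval : ∀ B ∈ S.image (orbF f), (S.filter (fun x => orbF f x = B)).card = k := by
    intro B hB
    obtain ⟨x₀, hx₀, rfl⟩ := Finset.mem_image.1 hB
    have hcard : (orbF f x₀).card = k := (Finset.mem_filter.1 hx₀).2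
    have : S.filter (fun x => orbF f x = orbF f x₀) = orbF f x₀ := by
      ext y
      simp only [Finset.mem_filter, hS, Finset.mem_univ, true_and, mem_orbF]
      constructor
      · rintro ⟨_, hy⟩
        have := self_mem_orbF f y
        rw [hy] at this; exact mem_orbF.1 this
      · intro hy
        have heq : orbF f y = orbF f x₀ := (orbF_eq_of_sameCycle hy).symm
        exact ⟨by rw [heq, hcard], heq⟩
    rw [this, hcard]
  rw [OC, ← hS, hfib, Finset.sum_congr rfl hval, Finset.sum_const, smul_eq_mul]
  exact Dvd.intro _ (mul_comm _ _)



section Merge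

variable {f : Perm α} {a b : α}

lemma not_sameCycle_fixed (hfa : f a = a) (hab : a ≠ b) : ¬ f.SameCycle b a := by
  rintro ⟨z, hz⟩
  apply hab
  have h2 : (f ^ (-z)) a = a := zpow_apply_eq_self_of_apply_eq_self hfa _
  have : (f ^ (-z)) ((f ^ z) b) = (f ^ (-z)) a := by rw [hz]
  simp only [← Equiv.Perm.mul_apply, ← zpow_add, neg_add_cancel, zpow_zero,
    Equiv.Perm.one_apply] at this
  rw [this, h2]

lemma merge_apply (x : α) : (swap a b * f) x = swap a b (f x) := rfl

/-- iterates agree outside the merged orbit -/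
lemma merge_pow_eq (hfa : f a = a) (hab : a ≠ b) {x : α} (hx : x ≠ a)
    (hx2 : ¬ f.SameCycle b x) :
    ∀ n : ℕ, ((swap a b * f) ^ n) x = (f ^ n) x ∧ (f ^ n) x ≠ a ∧ ¬ f.SameCycle b ((f ^ n) x) := by
  intro n
  induction n with
  | zero => exact ⟨rfl, hx, hx2⟩
  | succ n ih =>
    obtain ⟨he, hz1, hz2⟩ := ih
    set z := (f ^ n) x with hzdef
    have hfz1 : f z ≠ a := fun h => hz1 (f.injective (h.trans hfa.symm))
    have hfz2 : ¬ f.SameCycle b (f z) := fun h =>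
      hz2 (h.trans ((sameCycle_apply_left).2 (SameCycle.refl f z)))
    have hfzb : f z ≠ b := by
      intro h
      exact hz2 ((SameCycle.symm ⟨1, by simpa using h⟩ : f.SameCycle b z))
    have key : (f ^ (n+1)) x = f z := by rw [pow_succ', Equiv.Perm.mul_apply, ← hzdef]
    refine ⟨?_, by rw [key]; exact hfz1, by rw [key]; exact hfz2⟩
    have hstep : ((swap a b * f) ^ (n+1)) x = (swap a b * f) (((swap a b * f) ^ n) x) := by
      rw [pow_succ', Equiv.Perm.mul_apply]
    rw [key, hstep, he, merge_apply, swap_apply_of_ne_of_ne hfz1 hfzb]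

lemma merge_sameCycle_other (hfa : f a = a) (hab : a ≠ b) {x : α} (hx : x ≠ a)
    (hx2 : ¬ f.SameCycle b x) (y : α) :
    (swap a b * f).SameCycle x y ↔ f.SameCycle x y := by
  rw [sameCycle_iff_nat, sameCycle_iff_nat]
  constructor
  · rintro ⟨n, rfl⟩
    exact ⟨n, ((merge_pow_eq hfa hab hx hx2 n).1).symm⟩
  · rintro ⟨n, rfl⟩
    exact ⟨n, (merge_pow_eq hfa hab hx hx2 n).1⟩

lemma merge_sameCycle_a (hfa : f a = a) (hab : a ≠ b) (y : α) :
    (swap a b * f).SameCycle a y ↔ (y = a ∨ f.SameCycle b y) := by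
  have hπa : (swap a b * f) a = b := by rw [merge_apply, hfa, swap_apply_left]
  constructor
  · intro h
    obtain ⟨n, hn⟩ := sameCycle_iff_nat.1 h
    have claim : ∀ m : ℕ, ((swap a b * f) ^ m) a = a ∨
        f.SameCycle b (((swap a b * f) ^ m) a) := by
      intro m
      induction m with
      | zero => exact Or.inl rfl
      | succ m ih =>
        have hstep : ((swap a b * f) ^ (m+1)) a = (swap a b * f) (((swap a b * f) ^ m) a) := by
          rw [pow_succ', Equiv.Perm.mul_apply]
        rcases ih with h0 | h0
        · rw [hstep, h0, hπa]
          exact Or.inr (SameCycle.refl f b)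
        · set z := ((swap a b * f) ^ m) a with hz
          have hza : z ≠ a := fun hh => not_sameCycle_fixed hfa hab (hh ▸ h0)
          have hfza : f z ≠ a := fun hh => hza (f.injective (hh.trans hfa.symm))
          by_cases hfzb : f z = b
          · left; rw [hstep, merge_apply, hfzb, swap_apply_right]
          · right
            rw [hstep, merge_apply, swap_apply_of_ne_of_ne hfza hfzb]
            exact h0.trans ⟨1, by simp⟩
    rcases claim n with h0 | h0
    · left; rw [← hn]; exact h0
    · right; rw [← hn]; exact h0
  · intro h
    rcases h with rfl | h
    · exact SameCycle.refl _ _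
    · obtain ⟨n, hn⟩ := sameCycle_iff_nat.1 h
      clear h
      subst hn
      induction n with
      | zero => exact ⟨1, by simpa using hπa⟩
      | succ n ih =>
        set w := (f ^ n) b with hwdef
        have hwb : f.SameCycle b w := ⟨(n:ℤ), by simp [hwdef]⟩
        have hwa : w ≠ a := fun h => not_sameCycle_fixed hfa hab (h ▸ hwb)
        have hfwa : f w ≠ a := fun h => hwa (f.injective (h.trans hfa.symm))
        have hstep : (f ^ (n+1)) b = f w := by rw [pow_succ', Equiv.Perm.mul_apply, ← hwdef]
        rw [hstep]
        by_cases hfwb : f w = b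
        · rw [hfwb]; exact ⟨1, by simpa using hπa⟩
        · have hh : (swap a b * f) w = f w := by
            rw [merge_apply, swap_apply_of_ne_of_ne hfwa hfwb]
          exact ih.trans ⟨1, by simpa using hh⟩

end Merge

section MergeCount

variable {f : Perm α} {a b : α}

lemma orbF_merge_a (hfa : f a = a) (hab : a ≠ b) :
    orbF (swap a b * f) a = insert a (orbF f b) := by
  ext y
  rw [mem_orbF, merge_sameCycle_a hfa hab, Finset.mem_insert, mem_orbF]

lemma OC_swap_mul (hfa : f a = a) (hab : a ≠ b) (k : ℕ) :
    OC (swap a b * f) k + (if 1 = k then 1 else 0)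
      + (if (orbF f b).card = k then (orbF f b).card else 0)
    = OC f k + (if (orbF f b).card + 1 = k then (orbF f b).card + 1 else 0) := by
  classical
  have ha_nb : a ∉ orbF f b := fun h => not_sameCycle_fixed hfa hab (mem_orbF.1 h)
  set Lb := (orbF f b).card with hLb
  set M := insert a (orbF f b) with hM
  have hMcard : M.card = Lb + 1 := by rw [hM, Finset.card_insert_of_notMem ha_nb]
  have horbMa : orbF (swap a b * f) a = M := orbF_merge_a hfa hab
  have hmemM : ∀ x, x ∈ M ↔ (swap a b * f).SameCycle a x := by
    intro x
    rw [← horbMa, mem_orbF]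
  have h1 : ∀ x ∈ M, orbF (swap a b * f) x = M := by
    intro x hx
    rw [← (orbF_eq_of_sameCycle ((hmemM x).1 hx)), horbMa]
  have h2 : ∀ x, x ∉ M → orbF (swap a b * f) x = orbF f x := by
    intro x hx
    rw [hM, Finset.mem_insert, not_or] at hx
    ext y
    rw [mem_orbF, mem_orbF, merge_sameCycle_other hfa hab hx.1 (fun hc => hx.2 (mem_orbF.2 hc))]
  have h3 : ∀ x ∈ orbF f b, orbF f x = orbF f b :=
    fun x hx => (orbF_eq_of_sameCycle (mem_orbF.1 hx)).symm
  have hsplit : ∀ g : Perm α, OC g k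
      = ∑ x ∈ M, (if (orbF g x).card = k then 1 else 0)
        + ∑ x ∈ Finset.univ.filter (fun x => ¬ (x ∈ M)), (if (orbF g x).card = k then 1 else 0) := by
    intro g
    rw [OC, Finset.card_filter, ← Finset.sum_filter_add_sum_filter_not Finset.univ (· ∈ M),
      Finset.filter_univ_mem]
  have e1 : OC (swap a b * f) k
      = (if Lb + 1 = k then Lb + 1 else 0)
        + ∑ x ∈ Finset.univ.filter (fun x => ¬ (x ∈ M)), (if (orbF f x).card = k then 1 else 0) := by
    rw [hsplit]
    congr 1
    · rw [Finset.sum_congr rfl (fun x hx => by rw [h1 x hx, hMcard]), Finset.sum_const, hMcard,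
        smul_eq_mul, mul_ite, mul_one, mul_zero]
    · exact Finset.sum_congr rfl (fun x hx => by rw [h2 x (Finset.mem_filter.1 hx).2])
  have e2 : OC f k
      = ((if 1 = k then 1 else 0) + (if Lb = k then Lb else 0))
        + ∑ x ∈ Finset.univ.filter (fun x => ¬ (x ∈ M)), (if (orbF f x).card = k then 1 else 0) := by
    rw [hsplit]
    congr 1
    rw [hM, Finset.sum_insert ha_nb, orbF_of_fixed hfa, Finset.card_singleton]
    congr 1
    rw [Finset.sum_congr rfl (fun x hx => by rw [h3 x hx, ← hLb]), Finset.sum_const,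
      smul_eq_mul, mul_ite, mul_one, mul_zero]
  rw [e1, e2]
  split_ifs <;> omega

end MergeCount
section FinStuff

variable {m : ℕ}

/-- extension of a permutation with `0` as a new fixed point -/
def pi0 (e : Perm (Fin (m+1))) : Perm (Fin (m+2)) := Equiv.Perm.decomposeFin.symm (0, e)

/-- extension of a permutation merging `0` into the cycle of the old bottom element -/
def pi1 (e : Perm (Fin (m+1))) : Perm (Fin (m+2)) := Equiv.Perm.decomposeFin.symm (1, e)

lemma pi0_zero (e : Perm (Fin (m+1))) : pi0 e 0 = 0 :=
  Equiv.Perm.decomposeFin_symm_apply_zero 0 e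

lemma pi0_succ (e : Perm (Fin (m+1))) (i : Fin (m+1)) : pi0 e i.succ = (e i).succ := by
  rw [pi0, Equiv.Perm.decomposeFin_symm_apply_succ, swap_self]
  rfl

lemma pi1_eq (e : Perm (Fin (m+1))) : pi1 e = swap 0 1 * pi0 e := by
  apply Equiv.ext
  intro x
  refine Fin.cases ?_ ?_ x
  · rw [Equiv.Perm.mul_apply, pi0_zero]
    exact Equiv.Perm.decomposeFin_symm_apply_zero 1 e
  · intro i
    rw [Equiv.Perm.mul_apply, pi0_succ]
    exact Equiv.Perm.decomposeFin_symm_apply_succ e 1 i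

lemma pi0_pow (e : Perm (Fin (m+1))) (n : ℕ) (i : Fin (m+1)) :
    ((pi0 e) ^ n) i.succ = ((e ^ n) i).succ := by
  induction n with
  | zero => simp
  | succ n ih =>
    have h1 : ((pi0 e) ^ (n+1)) i.succ = (pi0 e) (((pi0 e) ^ n) i.succ) := by
      rw [pow_succ', Equiv.Perm.mul_apply]
    have h2 : ((e : Perm (Fin (m+1))) ^ (n+1)) i = e ((e ^ n) i) := by
      rw [pow_succ', Equiv.Perm.mul_apply]
    rw [h1, ih, pi0_succ, h2]

lemma pi0_sameCycle_succ (e : Perm (Fin (m+1))) (i j : Fin (m+1)) :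
    (pi0 e).SameCycle i.succ j.succ ↔ e.SameCycle i j := by
  rw [sameCycle_iff_nat, sameCycle_iff_nat]
  constructor
  · rintro ⟨n, hn⟩
    rw [pi0_pow] at hn
    exact ⟨n, Fin.succ_injective _ hn⟩
  · rintro ⟨n, hn⟩
    exact ⟨n, by rw [pi0_pow, hn]⟩

lemma pi0_sameCycle_zero (e : Perm (Fin (m+1))) (y : Fin (m+2)) :
    (pi0 e).SameCycle 0 y ↔ y = 0 := by
  constructor
  · intro h
    have := mem_orbF.2 h
    rw [orbF_of_fixed (pi0_zero e)] at this
    exact (Finset.mem_singleton.1 this)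
  · rintro rfl; exact Equiv.Perm.SameCycle.refl _ _

lemma orbF_pi0_succ (e : Perm (Fin (m+1))) (i : Fin (m+1)) :
    orbF (pi0 e) i.succ = (orbF e i).image Fin.succ := by
  ext y
  refine Fin.cases ?_ ?_ y
  · constructor
    · intro h
      exact absurd ((pi0_sameCycle_zero e i.succ).1 (mem_orbF.1 h).symm) (Fin.succ_ne_zero i)
    · intro h
      rw [Finset.mem_image] at h
      obtain ⟨a, _, ha⟩ := h
      exact absurd ha (Fin.succ_ne_zero a)
  · intro j
    rw [mem_orbF, pi0_sameCycle_succ, Finset.mem_image]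
    constructor
    · intro h
      exact ⟨j, mem_orbF.2 h, rfl⟩
    · rintro ⟨a, ha, haj⟩
      rw [← Fin.succ_injective _ haj]
      exact mem_orbF.1 ha

lemma card_orbF_pi0_succ (e : Perm (Fin (m+1))) (i : Fin (m+1)) :
    (orbF (pi0 e) i.succ).card = (orbF e i).card := by
  rw [orbF_pi0_succ, Finset.card_image_of_injective _ (Fin.succ_injective _)]

/-- length of the cycle containing the bottom element -/
def botLen {N : ℕ} [NeZero N] (e : Perm (Fin N)) : ℕ := (orbF e 0).card

lemma botLen_pos {N : ℕ} [NeZero N] (e : Perm (Fin N)) : 1 ≤ botLen e :=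
  Finset.card_pos.2 ⟨0, self_mem_orbF e 0⟩

lemma botLen_pi0 (e : Perm (Fin (m+1))) : botLen (pi0 e) = 1 := by
  rw [botLen, orbF_of_fixed (pi0_zero e), Finset.card_singleton]

lemma card_orbF_pi0_one (e : Perm (Fin (m+1))) : (orbF (pi0 e) 1).card = botLen e := by
  rw [← Fin.succ_zero_eq_one, card_orbF_pi0_succ, botLen]

lemma zero_ne_one_fin : (0 : Fin (m+2)) ≠ 1 := Fin.zero_ne_one

lemma botLen_pi1 (e : Perm (Fin (m+1))) : botLen (pi1 e) = botLen e + 1 := by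
  have h0 : (0 : Fin (m+2)) ∉ orbF (pi0 e) 1 := fun h =>
    not_sameCycle_fixed (pi0_zero e) zero_ne_one_fin (mem_orbF.1 h)
  rw [botLen, pi1_eq, orbF_merge_a (pi0_zero e) zero_ne_one_fin,
    Finset.card_insert_of_notMem h0, card_orbF_pi0_one]

lemma OC_pi0 (e : Perm (Fin (m+1))) (k : ℕ) :
    OC (pi0 e) k = OC e k + (if 1 = k then 1 else 0) := by
  rw [OC, OC, Finset.card_filter, Finset.card_filter, Fin.sum_univ_succ]
  have h0 : (orbF (pi0 e) 0).card = 1 := by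
    rw [orbF_of_fixed (pi0_zero e), Finset.card_singleton]
  rw [h0, add_comm]
  congr 1
  exact Finset.sum_congr rfl (fun i _ => by rw [card_orbF_pi0_succ])

lemma OC_pi1 (e : Perm (Fin (m+1))) (k : ℕ) :
    OC (pi1 e) k + (if botLen e = k then botLen e else 0)
    = OC e k + (if botLen e + 1 = k then botLen e + 1 else 0) := by
  have h := OC_swap_mul (pi0_zero e) zero_ne_one_fin k
  rw [card_orbF_pi0_one, OC_pi0] at h
  rw [pi1_eq]
  split_ifs at h ⊢ <;> omega

end FinStuff
section Decomp

variable {m : ℕ}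

/-- the b₂ condition -/
def bcond {N : ℕ} (π : Perm (Fin N)) : Prop := ∀ i, (π i : ℕ) ≤ (i : ℕ) + 1

instance {N : ℕ} : DecidablePred (@bcond N) := fun _ => Fintype.decidableForallFintype

/-- b₂-regular permutations -/
def FB (N : ℕ) : Finset (Perm (Fin N)) := Finset.univ.filter bcond

lemma cond_symm_iff (p : Fin (m+2)) (e : Perm (Fin (m+1))) :
    bcond (Equiv.Perm.decomposeFin.symm (p, e)) ↔ ((p = 0 ∨ p = 1) ∧ bcond e) := by
  constructor
  · intro h
    have hp0 : ((Equiv.Perm.decomposeFin.symm (p, e)) 0 : ℕ) ≤ 1 := by simpa using h 0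
    rw [Equiv.Perm.decomposeFin_symm_apply_zero] at hp0
    have hp : p = 0 ∨ p = 1 := by
      rcases Nat.le_one_iff_eq_zero_or_eq_one.1 hp0 with h' | h'
      · left; exact Fin.ext (by simpa using h')
      · right; exact Fin.ext (by simp [h', Fin.val_one])
    refine ⟨hp, fun i => ?_⟩
    have hi := h i.succ
    rw [Equiv.Perm.decomposeFin_symm_apply_succ] at hi
    rcases hp with rfl | rfl
    · rw [swap_self] at hi
      simp only [Equiv.refl_apply, Fin.val_succ] at hi
      simpa using hi
    · by_cases he : e i = 0
      · simp [he]
      · have h1 : (e i).succ ≠ 0 := Fin.succ_ne_zero _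
        have h2 : (e i).succ ≠ 1 := by
          rw [← Fin.succ_zero_eq_one]
          exact fun hc => he (Fin.succ_injective _ hc)
        rw [swap_apply_of_ne_of_ne h1 h2] at hi
        simp only [Fin.val_succ] at hi
        simpa using hi
  · rintro ⟨hp, he⟩
    intro i
    refine Fin.cases ?_ ?_ i
    · rw [Equiv.Perm.decomposeFin_symm_apply_zero]
      rcases hp with rfl | rfl <;> simp [Fin.val_one]
    · intro j
      rw [Equiv.Perm.decomposeFin_symm_apply_succ]
      rcases hp with rfl | rfl
      · rw [swap_self]
        simpa using he j
      · by_cases hej : e j = 0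
        · rw [hej, Fin.succ_zero_eq_one, swap_apply_right]
          simp
        · have h1 : (e j).succ ≠ 0 := Fin.succ_ne_zero _
          have h2 : (e j).succ ≠ 1 := by
            rw [← Fin.succ_zero_eq_one]
            exact fun hc => hej (Fin.succ_injective _ hc)
          rw [swap_apply_of_ne_of_ne h1 h2]
          simpa using he j

lemma cond_pi0_iff (e : Perm (Fin (m+1))) : bcond (pi0 e) ↔ bcond e := by
  rw [pi0, cond_symm_iff]
  simp

lemma cond_pi1_iff (e : Perm (Fin (m+1))) : bcond (pi1 e) ↔ bcond e := by
  rw [pi1, cond_symm_iff]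
  simp

lemma sum_FB_succ (f : Perm (Fin (m+2)) → ℚ) :
    ∑ π ∈ FB (m+2), f π = ∑ e ∈ FB (m+1), (f (pi0 e) + f (pi1 e)) := by
  classical
  have h1 : ∑ π ∈ FB (m+2), f π
      = ∑ x : Fin (m+2) × Perm (Fin (m+1)),
          (if bcond (Equiv.Perm.decomposeFin.symm x) then f (Equiv.Perm.decomposeFin.symm x)
           else 0) := by
    rw [FB, Finset.sum_filter]
    exact (Equiv.sum_comp Equiv.Perm.decomposeFin.symm
      (fun π => if bcond π then f π else 0)).symm
  rw [h1, Fintype.sum_prod_type]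
  rw [← Finset.sum_subset (Finset.subset_univ ({0, 1} : Finset (Fin (m+2))))
    (fun p _ hnp => ?_)]
  · rw [Finset.sum_pair zero_ne_one_fin, FB, Finset.sum_filter]
    rw [← Finset.sum_add_distrib]
    apply Finset.sum_congr rfl
    intro e _
    have c0 : bcond (Equiv.Perm.decomposeFin.symm ((0 : Fin (m+2)), e)) ↔ bcond e := cond_pi0_iff e
    have c1 : bcond (Equiv.Perm.decomposeFin.symm ((1 : Fin (m+2)), e)) ↔ bcond e := cond_pi1_iff e
    by_cases hc : bcond e
    · rw [if_pos (c0.2 hc), if_pos (c1.2 hc), if_pos hc]; rfl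
    · rw [if_neg (fun h => hc (c0.1 h)), if_neg (fun h => hc (c1.1 h)), if_neg hc, add_zero]
  · apply Finset.sum_eq_zero
    intro e _
    rw [if_neg]
    rw [cond_symm_iff]
    rintro ⟨hp, -⟩
    simp only [Finset.mem_insert, Finset.mem_singleton] at hnp
    exact hnp hp

end Decomp
section Quantities

variable {m k ℓ : ℕ}

def Pq (m : ℕ) : ℚ := ((FB (m+1)).card : ℚ)
def Aq (k m : ℕ) : ℚ := ∑ π ∈ FB (m+1), (OC π k : ℚ)
def Bq (k m : ℕ) : ℚ := ∑ π ∈ FB (m+1), (OC π k : ℚ)^2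
def Tq (m ℓ : ℕ) : ℚ := ∑ π ∈ FB (m+1), if botLen π = ℓ then (1:ℚ) else 0
def Uq (k m ℓ : ℕ) : ℚ := ∑ π ∈ FB (m+1), if botLen π = ℓ then (OC π k : ℚ) else 0

lemma card_FB_eq_sum (N : ℕ) : ((FB N).card : ℚ) = ∑ _π ∈ FB N, (1:ℚ) := by simp

lemma OCq0 (e : Perm (Fin (m+1))) (k : ℕ) :
    (OC (pi0 e) k : ℚ) = (OC e k : ℚ) + (if 1 = k then 1 else 0) := by
  rw [OC_pi0, Nat.cast_add, apply_ite (Nat.cast : ℕ → ℚ), Nat.cast_one, Nat.cast_zero]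

lemma OCq1 (e : Perm (Fin (m+1))) (k : ℕ) :
    (OC (pi1 e) k : ℚ) = (OC e k : ℚ) + (if botLen e + 1 = k then (k:ℚ) else 0)
      - (if botLen e = k then (k:ℚ) else 0) := by
  have h := congrArg (fun t : ℕ => (t : ℚ)) (OC_pi1 e k)
  push_cast at h
  by_cases c1 : botLen e + 1 = k <;> by_cases c2 : botLen e = k
  · omega
  · rw [if_pos c1, if_neg c2] at h ⊢
    have hc : (botLen e : ℚ) + 1 = (k : ℚ) := by exact_mod_cast congrArg (Nat.cast : ℕ → ℚ) c1
    linarith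
  · rw [if_neg c1, if_pos c2] at h ⊢
    have hc : (botLen e : ℚ) = (k : ℚ) := by exact_mod_cast congrArg (Nat.cast : ℕ → ℚ) c2
    linarith
  · rw [if_neg c1, if_neg c2] at h ⊢
    linarith

lemma Pq_succ (m : ℕ) : Pq (m+1) = 2 * Pq m := by
  rw [Pq, card_FB_eq_sum, sum_FB_succ, Pq, card_FB_eq_sum, Finset.sum_add_distrib, two_mul]

lemma Tq_zero (m : ℕ) : Tq m 0 = 0 :=
  Finset.sum_eq_zero (fun π _ => if_neg (by have := botLen_pos π; omega))

lemma Uq_zero (k m : ℕ) : Uq k m 0 = 0 :=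
  Finset.sum_eq_zero (fun π _ => if_neg (by have := botLen_pos π; omega))

lemma Tq_succ (m ℓ : ℕ) : Tq (m+1) (ℓ+1) = (if ℓ = 0 then Pq m else 0) + Tq m ℓ := by
  rw [Tq, sum_FB_succ, Finset.sum_add_distrib]
  congr 1
  · by_cases hℓ : ℓ = 0
    · subst hℓ
      rw [if_pos rfl, Pq, card_FB_eq_sum]
      exact Finset.sum_congr rfl (fun e _ => by rw [botLen_pi0, if_pos rfl])
    · rw [if_neg hℓ]
      exact Finset.sum_eq_zero (fun e _ => by rw [botLen_pi0, if_neg (by omega)])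
  · exact Finset.sum_congr rfl (fun e _ => by
      rw [botLen_pi1, if_congr (by omega : botLen e + 1 = ℓ + 1 ↔ botLen e = ℓ) rfl rfl])

set_option maxHeartbeats 1600000 in
lemma Aq_succ (k m : ℕ) (hk : 1 ≤ k) :
    Aq k (m+1) = 2 * Aq k m + (if 1 = k then Pq m else 0)
      + (k:ℚ) * Tq m (k-1) - (k:ℚ) * Tq m k := by
  rw [Aq, sum_FB_succ]
  have expand : ∀ e : Perm (Fin (m+1)),
      (OC (pi0 e) k : ℚ) + (OC (pi1 e) k : ℚ)
      = 2 * (OC e k : ℚ) + (if 1 = k then (1:ℚ) else 0)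
        + ((k:ℚ) * (if botLen e = k - 1 then (1:ℚ) else 0)
        - (k:ℚ) * (if botLen e = k then (1:ℚ) else 0)) := by
    intro e
    rw [OCq0, OCq1, if_congr (by omega : botLen e + 1 = k ↔ botLen e = k - 1) rfl rfl]
    split_ifs <;> ring1
  rw [Finset.sum_congr rfl (fun e _ => expand e)]
  have hconst : (∑ _e ∈ FB (m+1), (if 1 = k then (1:ℚ) else 0))
      = (if 1 = k then Pq m else 0) := by
    split_ifs
    · rw [Pq, card_FB_eq_sum]
    · simp
  simp only [Finset.sum_add_distrib, Finset.sum_sub_distrib, ← Finset.mul_sum]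
  rw [hconst, Aq, Tq, Tq]
  ring

set_option maxHeartbeats 1600000 in
lemma Uq_succ (k m ℓ : ℕ) (hk : 1 ≤ k) :
    Uq k (m+1) (ℓ+1) = (if ℓ = 0 then Aq k m + (if 1 = k then Pq m else 0) else 0)
      + Uq k m ℓ + (if ℓ = k-1 then (k:ℚ) else 0) * Tq m ℓ
      - (if ℓ = k then (k:ℚ) else 0) * Tq m ℓ := by
  rw [Uq, sum_FB_succ]
  have hterm : ∀ e : Perm (Fin (m+1)),
      ((if botLen (pi0 e) = ℓ+1 then (OC (pi0 e) k : ℚ) else 0)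
        + (if botLen (pi1 e) = ℓ+1 then (OC (pi1 e) k : ℚ) else 0))
      = (if ℓ = 0 then ((OC e k : ℚ) + (if 1 = k then (1:ℚ) else 0)) else 0)
        + (if botLen e = ℓ then (OC e k : ℚ) else 0)
        + (if ℓ = k-1 then (k:ℚ) else 0) * (if botLen e = ℓ then (1:ℚ) else 0)
        - (if ℓ = k then (k:ℚ) else 0) * (if botLen e = ℓ then (1:ℚ) else 0) := by
    intro e
    rw [botLen_pi0, botLen_pi1, OCq0, OCq1]
    have := botLen_pos e
    split_ifs <;> first | ring1 | (exfalso; omega)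
  rw [Finset.sum_congr rfl (fun e _ => hterm e)]
  have hconst : (∑ e ∈ FB (m+1),
      (if ℓ = 0 then ((OC e k : ℚ) + (if 1 = k then (1:ℚ) else 0)) else 0))
      = (if ℓ = 0 then Aq k m + (if 1 = k then Pq m else 0) else 0) := by
    split_ifs with h1 h2
    · rw [Finset.sum_add_distrib, Aq, Pq, card_FB_eq_sum]
    · rw [Finset.sum_add_distrib, Aq]
      simp
    · simp
  simp only [Finset.sum_add_distrib, Finset.sum_sub_distrib, ← Finset.mul_sum]
  rw [hconst, Uq, Tq]

set_option maxHeartbeats 1600000 in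
lemma Bq_succ (k m : ℕ) (hk : 1 ≤ k) :
    Bq k (m+1) = 2 * Bq k m + (if 1 = k then 2 * Aq k m + Pq m else 0)
      + 2*(k:ℚ)*(Uq k m (k-1) - Uq k m k) + (k:ℚ)^2*(Tq m (k-1) + Tq m k) := by
  rw [Bq, sum_FB_succ]
  have hterm : ∀ e : Perm (Fin (m+1)),
      ((OC (pi0 e) k : ℚ)^2 + (OC (pi1 e) k : ℚ)^2)
      = 2 * (OC e k : ℚ)^2 + (if 1 = k then 2 * (OC e k : ℚ) + 1 else 0)
        + 2*(k:ℚ)*((if botLen e = k-1 then (OC e k : ℚ) else 0)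
            - (if botLen e = k then (OC e k : ℚ) else 0))
        + (k:ℚ)^2*((if botLen e = k-1 then (1:ℚ) else 0)
            + (if botLen e = k then (1:ℚ) else 0)) := by
    intro e
    rw [OCq0, OCq1, if_congr (by omega : botLen e + 1 = k ↔ botLen e = k - 1) rfl rfl]
    split_ifs <;> first | ring1 | (exfalso; omega)
  rw [Finset.sum_congr rfl (fun e _ => hterm e)]
  have hconst : (∑ e ∈ FB (m+1), (if 1 = k then 2 * (OC e k : ℚ) + 1 else 0))
      = (if 1 = k then 2 * Aq k m + Pq m else 0) := by
    split_ifs with h1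
    · rw [Finset.sum_add_distrib, Aq, Pq, card_FB_eq_sum, ← Finset.mul_sum]
    · simp
  simp only [Finset.sum_add_distrib, Finset.sum_sub_distrib, ← Finset.mul_sum]
  rw [hconst, Bq, Uq, Uq, Tq, Tq]

end Quantities
section Base

lemma perm_fin_one_eq (π : Perm (Fin 1)) : π = 1 := by
  apply Equiv.ext
  intro i
  exact Subsingleton.elim _ _

lemma FB_one : FB 1 = {(1 : Perm (Fin 1))} := by
  ext π
  simp only [FB, Finset.mem_filter, Finset.mem_univ, true_and, Finset.mem_singleton]
  constructor
  · intro _; exact perm_fin_one_eq π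
  · rintro rfl
    intro i
    simp

lemma OC_one_fin1 (k : ℕ) : OC (1 : Perm (Fin 1)) k = if 1 = k then 1 else 0 := by
  rw [OC, Finset.card_filter, Fin.sum_univ_one,
    orbF_of_fixed (Equiv.Perm.one_apply 0), Finset.card_singleton]

lemma botLen_one_fin1 : botLen (1 : Perm (Fin 1)) = 1 := by
  rw [botLen, orbF_of_fixed (Equiv.Perm.one_apply 0), Finset.card_singleton]

lemma Pq_zero : Pq 0 = 1 := by rw [Pq, FB_one]; simp

lemma Aq_zero (k : ℕ) : Aq k 0 = if 1 = k then 1 else 0 := by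
  rw [Aq, FB_one, Finset.sum_singleton, OC_one_fin1]
  split_ifs <;> simp

lemma Bq_zero (k : ℕ) : Bq k 0 = if 1 = k then 1 else 0 := by
  rw [Bq, FB_one, Finset.sum_singleton, OC_one_fin1]
  split_ifs <;> norm_num

lemma Tq_base (ℓ : ℕ) : Tq 0 ℓ = if 1 = ℓ then 1 else 0 := by
  rw [Tq, FB_one, Finset.sum_singleton, botLen_one_fin1]

lemma Uq_base (k ℓ : ℕ) : Uq k 0 ℓ = if 1 = ℓ then (if 1 = k then 1 else 0) else 0 := by
  rw [Uq, FB_one, Finset.sum_singleton, botLen_one_fin1, OC_one_fin1]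
  split_ifs <;> simp

end Base

section ClosedForms

/-- closed form for `Tq` -/
def Tcl (m ℓ : ℕ) : ℚ :=
  if ℓ = 0 then 0 else if ℓ ≤ m then 2^m/2^ℓ else if ℓ = m+1 then 1 else 0

/-- closed form for `Aq` -/
def Acl (k j : ℕ) : ℚ :=
  if j+1 < k then 0 else if j+1 = k then (k:ℚ) else if j+1 = k+1 then 2*(k:ℚ)
  else (k:ℚ)*((j:ℚ)+4-(k:ℚ))*2^j/2^(k+1)

lemma Pq_eq (m : ℕ) : Pq m = 2^m := by
  induction m with
  | zero => rw [Pq_zero]; norm_num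
  | succ m ih => rw [Pq_succ, ih]; ring

lemma one_eq_add_one_iff {K : ℕ} : 1 = K + 1 ↔ K = 0 := by omega

set_option maxHeartbeats 2000000 in
lemma Tq_eq (m ℓ : ℕ) : Tq m ℓ = Tcl m ℓ := by
  induction m generalizing ℓ with
  | zero =>
    rw [Tq_base, Tcl]
    split_ifs <;> first | (exfalso; omega) | rfl | norm_num
  | succ m ih =>
    match ℓ with
    | 0 => rw [Tq_zero, Tcl, if_pos rfl]
    | (ℓ+1) =>
      rw [Tq_succ, ih ℓ, Pq_eq, Tcl, Tcl]
      simp only [Nat.succ_sub_succ, add_le_add_iff_right, add_left_inj, add_lt_add_iff_right,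
        Nat.succ_ne_zero, if_false, one_eq_add_one_iff]
      split_ifs
      all_goals try (exfalso; omega)
      all_goals subst_vars
      all_goals (push_cast; try field_simp; try ring1; try rfl; try norm_num)

set_option maxHeartbeats 2000000 in
lemma Aq_eq (k : ℕ) (hk : 1 ≤ k) (m : ℕ) : Aq k m = Acl k m := by
  obtain ⟨K, rfl⟩ : ∃ K, k = K + 1 := ⟨k - 1, by omega⟩
  induction m with
  | zero =>
    rw [Aq_zero, Acl]
    simp only [add_le_add_iff_right, add_left_inj, add_lt_add_iff_right, one_eq_add_one_iff]
    split_ifs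
    all_goals try (exfalso; omega)
    all_goals subst_vars
    all_goals (push_cast; try field_simp; try ring1; try rfl; try norm_num)
  | succ m ih =>
    rw [Aq_succ _ _ (by omega), ih, Tq_eq, Tq_eq, Pq_eq, Acl, Acl, Tcl, Tcl]
    simp only [Nat.add_sub_cancel, add_le_add_iff_right, add_left_inj, add_lt_add_iff_right,
      Nat.succ_ne_zero, if_false, one_eq_add_one_iff]
    split_ifs
    all_goals try (exfalso; omega)
    all_goals subst_vars
    all_goals (push_cast; try field_simp; try ring1; try rfl; try norm_num)

end ClosedForms
section UClosed

set_option maxHeartbeats 4000000 in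
lemma Uq_eq (k : ℕ) (hk : 1 ≤ k) (ℓ m : ℕ) : Uq k m ℓ =
    if ℓ = 0 then 0
    else if ℓ ≤ m then Acl k (m-ℓ) + (if ℓ = k then (k:ℚ)*(2^m/2^ℓ) else 0)
    else if ℓ = m+1 then (if k = m+1 then (k:ℚ) else 0) else 0 := by
  obtain ⟨K, rfl⟩ : ∃ K, k = K + 1 := ⟨k - 1, by omega⟩
  induction ℓ generalizing m with
  | zero => rw [Uq_zero, if_pos rfl]
  | succ ℓ ih =>
    match m with
    | 0 =>
      rw [Uq_base]
      simp only [add_le_add_iff_right, add_left_inj, one_eq_add_one_iff]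
      split_ifs
      all_goals try contradiction
      all_goals try (exfalso; omega)
      all_goals subst_vars
      all_goals (push_cast; try field_simp; try ring1; try rfl; try norm_num)
    | (m+1) =>
      rw [Uq_succ _ _ _ (by omega), ih m, Aq_eq _ (by omega), Tq_eq, Pq_eq, Tcl]
      simp only [Nat.succ_sub_succ, Nat.add_sub_cancel, add_le_add_iff_right, add_left_inj,
        add_lt_add_iff_right, Nat.succ_ne_zero, if_false, one_eq_add_one_iff]
      split_ifs
      all_goals try contradiction
      all_goals try (exfalso; omega)
      all_goals subst_vars
      all_goals try simp only [Nat.sub_zero]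
      all_goals (push_cast; try field_simp; try ring1; try rfl; try norm_num)

end UClosed
section BClosed

/-- generic closed form for `Bq`, valid for `m ≥ 2k` -/
def Bgen (k m : ℕ) : ℚ := (k:ℚ)^2*( ((m:ℚ)+4-(k:ℚ))*2^(m+1)/2^(k+2)
  + ((m:ℚ)+4-2*(k:ℚ))*2^(m+1)/2^(2*k+1)
  + (((m:ℚ)+1-2*(k:ℚ))^2+5*((m:ℚ)+1-2*(k:ℚ))+2)*2^(m+1)/2^(2*k+3) )

lemma OC_le {N : ℕ} (π : Perm (Fin N)) (k : ℕ) : OC π k ≤ N :=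
  le_trans (Finset.card_filter_le _ _) (by simp)

lemma Bq_low (k m : ℕ) (hk : 1 ≤ k) (h : m + 1 < 2*k) : Bq k m = (k:ℚ) * Aq k m := by
  rw [Bq, Aq, Finset.mul_sum]
  apply Finset.sum_congr rfl
  intro π _
  obtain ⟨c, hc⟩ := OC_dvd π k
  have hle : OC π k ≤ m+1 := OC_le π k
  have hc1 : c ≤ 1 := by
    by_contra hc2
    have : k*2 ≤ k*c := Nat.mul_le_mul_left k (by omega)
    omega
  rcases Nat.le_one_iff_eq_zero_or_eq_one.1 hc1 with rfl | rfl
  · rw [hc]; push_cast; ring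
  · rw [hc]; push_cast; ring

lemma Tq_val (m ℓ : ℕ) (h0 : 1 ≤ ℓ) (h1 : ℓ ≤ m) : Tq m ℓ = 2^m/2^ℓ := by
  rw [Tq_eq, Tcl, if_neg (by omega), if_pos h1]

lemma Aq_val (k m : ℕ) (hk : 1 ≤ k) (h : k+2 ≤ m+1) :
    Aq k m = (k:ℚ)*((m:ℚ)+4-(k:ℚ))*2^m/2^(k+1) := by
  rw [Aq_eq _ hk, Acl, if_neg (by omega), if_neg (by omega), if_neg (by omega)]

lemma Acl_val (k jj : ℕ) (h : k+2 ≤ jj+1) :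
    Acl k jj = (k:ℚ)*((jj:ℚ)+4-(k:ℚ))*2^jj/2^(k+1) := by
  rw [Acl, if_neg (by omega), if_neg (by omega), if_neg (by omega)]

lemma Uq_val (k m ℓ : ℕ) (hk : 1 ≤ k) (h0 : 1 ≤ ℓ) (h1 : ℓ ≤ m) :
    Uq k m ℓ = Acl k (m-ℓ) + (if ℓ = k then (k:ℚ)*(2^m/2^ℓ) else 0) := by
  rw [Uq_eq _ hk, if_neg (by omega), if_pos h1]

set_option maxHeartbeats 2000000 in
lemma Bq_base (K : ℕ) : Bq (K+1) (2*K+2) = Bgen (K+1) (2*K+2) := by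
  rcases K with _ | (_ | W)
  · rw [show 2*0+2 = 0+1+1 from rfl, Bq_succ _ _ (by omega), Bq_succ _ _ (by omega), Bq_zero]
    norm_num [Aq_eq, Pq_eq, Tq_eq, Uq_eq, Acl, Tcl, Bgen]
  · rw [show 2*1+2 = 2+1+1 from rfl, Bq_succ _ _ (by omega), Bq_succ _ _ (by omega),
      Bq_low _ _ (by omega) (by omega)]
    norm_num [Aq_eq, Pq_eq, Tq_eq, Uq_eq, Acl, Tcl, Bgen]
  · set K := W+1+1 with hK
    rw [show 2*K+2 = (2*K)+1+1 from by omega, Bq_succ _ _ (by omega), Bq_succ _ _ (by omega),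
      Bq_low _ _ (by omega) (by omega)]
    rw [if_neg (by omega), if_neg (by omega)]
    simp only [Nat.add_sub_cancel]
    rw [Tq_val _ _ (by omega) (by omega), Tq_val _ _ (by omega) (by omega),
      Tq_val _ _ (by omega) (by omega), Tq_val _ _ (by omega) (by omega)]
    rw [Uq_val _ _ _ (by omega) (by omega) (by omega),
      Uq_val _ _ _ (by omega) (by omega) (by omega),
      Uq_val _ _ _ (by omega) (by omega) (by omega),
      Uq_val _ _ _ (by omega) (by omega) (by omega)]
    rw [Aq_val _ _ (by omega) (by omega)]
    simp only [show 2*K - K = K from by omega, show 2*K - (K+1) = K-1 from by omega,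
      show 2*K+1 - K = K+1 from by omega, show 2*K+1 - (K+1) = K from by omega]
    have hA1 : Acl (K+1) K = ((K+1 : ℕ) : ℚ) := by
      rw [Acl, if_neg (by omega), if_pos (by omega)]
    have hA2 : Acl (K+1) (K-1) = 0 := by
      rw [Acl, if_pos (by omega)]
    have hA3 : Acl (K+1) (K+1) = 2*((K+1 : ℕ) : ℚ) := by
      rw [Acl, if_neg (by omega), if_neg (by omega), if_pos (by omega)]
    simp only [hA1, hA2, hA3, if_neg (show ¬ (K = K+1) from by omega),
      if_pos (rfl : K+1 = K+1)]
    rw [Bgen]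
    push_cast
    field_simp
    ring1

set_option maxHeartbeats 2000000 in
lemma Bq_gen (K : ℕ) : ∀ j, Bq (K+1) (2*K+2+j) = Bgen (K+1) (2*K+2+j) := by
  intro j
  induction j with
  | zero => exact Bq_base K
  | succ j ih =>
    rw [show 2*K+2+(j+1) = (2*K+2+j)+1 from by omega, Bq_succ _ _ (by omega), ih]
    simp only [Nat.add_sub_cancel]
    rcases Nat.eq_zero_or_pos K with rfl | hK
    · rw [if_pos (by norm_num), Tq_zero, Uq_zero,
        Tq_val _ _ (by omega) (by omega),
        Uq_val _ _ _ (by omega) (by omega) (by omega),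
        if_pos (rfl : 0+1 = 0+1), Aq_val _ _ (by omega) (by omega), Pq_eq]
      rw [show 2*0+2+j - (0+1) = j+1 from by omega]
      rcases j with _ | j
      · norm_num [Acl, Bgen]
        all_goals (field_simp; ring1)
      · rw [Acl_val _ _ (by omega)]
        simp only [show 2*0+2+(j+1) = j+3 from by omega, show 2*0+2+(j+1)+1 = j+4 from by omega]
        rw [Bgen, Bgen]
        push_cast
        field_simp
        ring1
    · rw [if_neg (by omega)]
      rw [Tq_val _ _ (by omega) (by omega), Tq_val _ _ (by omega) (by omega)]
      rw [Uq_val _ _ _ (by omega) (by omega) (by omega),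
        Uq_val _ _ _ (by omega) (by omega) (by omega)]
      rw [if_neg (show ¬ (K = K+1) from by omega), if_pos (rfl : K+1 = K+1)]
      rw [show 2*K+2+j - K = K+2+j from by omega, show 2*K+2+j - (K+1) = K+1+j from by omega]
      rw [Acl_val _ _ (by omega)]
      rcases j with _ | j
      · rw [show K+1+0 = K+1 from rfl]
        have hA3 : Acl (K+1) (K+1) = 2*((K+1 : ℕ) : ℚ) := by
          rw [Acl, if_neg (by omega), if_neg (by omega), if_pos (by omega)]
        rw [hA3, Bgen, Bgen]
        push_cast
        field_simp
        ring1
      · rw [Acl_val _ _ (by omega), Bgen, Bgen]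
        push_cast
        field_simp
        ring1

end BClosed
section Transfer

variable {N : ℕ}

lemma card_orbF_conj (r π : Perm (Fin N)) (x : Fin N) :
    (orbF (r * π * r⁻¹) x).card = (orbF π (r⁻¹ x)).card := by
  have himg : orbF (r * π * r⁻¹) x = (orbF π (r⁻¹ x)).image r := by
    ext y
    simp only [mem_orbF, Finset.mem_image]
    rw [Equiv.Perm.sameCycle_conj]
    constructor
    · intro h; exact ⟨r⁻¹ y, h, by simp⟩
    · rintro ⟨a, ha, rfl⟩
      simpa using ha
  rw [himg, Finset.card_image_of_injective _ r.injective]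

lemma OC_conj (r π : Perm (Fin N)) (k : ℕ) : OC (r * π * r⁻¹) k = OC π k := by
  have himg : Finset.univ.filter (fun x => (orbF (r*π*r⁻¹) x).card = k)
      = (Finset.univ.filter (fun x => (orbF π x).card = k)).image r := by
    ext x
    simp only [Finset.mem_filter, Finset.mem_univ, true_and, Finset.mem_image]
    rw [card_orbF_conj]
    constructor
    · intro h; exact ⟨r⁻¹ x, h, by simp⟩
    · rintro ⟨a, ha, rfl⟩
      simpa using ha
  rw [OC, OC, himg, Finset.card_image_of_injective _ r.injective]

lemma revPerm_inv_eq : (Fin.revPerm : Perm (Fin N))⁻¹ = Fin.revPerm := rfl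

lemma bcond_conj_iff (π : Perm (Fin N)) :
    bcond (Fin.revPerm * π * Fin.revPerm⁻¹) ↔ (∀ i : Fin N, (i:ℕ) ≤ (π i : ℕ) + 1) := by
  constructor
  · intro h i
    have hi := h (Fin.rev i)
    simp only [revPerm_inv_eq, Equiv.Perm.mul_apply, Fin.revPerm_apply, Fin.rev_rev,
      Fin.val_rev] at hi
    have h1 := i.isLt
    have h2 := (π i).isLt
    omega
  · intro h i
    have hi := h (Fin.rev i)
    simp only [revPerm_inv_eq, Equiv.Perm.mul_apply, Fin.revPerm_apply, Fin.rev_rev]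
    simp only [Fin.val_rev] at hi ⊢
    have h1 := i.isLt
    have h2 := (π (Fin.rev i)).isLt
    omega

lemma sum_transfer (k : ℕ) (F : ℕ → ℚ) :
    ∑ π ∈ Finset.univ.filter (fun π : Perm (Fin N) => ∀ i : Fin N, (i : ℕ) ≤ (π i : ℕ) + 1),
      F (OC π k)
    = ∑ π ∈ FB N, F (OC π k) := by
  refine Finset.sum_nbij' (i := fun π => Fin.revPerm * π * Fin.revPerm⁻¹)
    (j := fun σ => Fin.revPerm⁻¹ * σ * Fin.revPerm) ?_ ?_ ?_ ?_ ?_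
  · intro π hπ
    rw [Finset.mem_filter] at hπ
    rw [FB, Finset.mem_filter]
    exact ⟨Finset.mem_univ _, (bcond_conj_iff π).2 hπ.2⟩
  · intro σ hσ
    rw [FB, Finset.mem_filter] at hσ
    rw [Finset.mem_filter]
    refine ⟨Finset.mem_univ _, ?_⟩
    have : Fin.revPerm * (Fin.revPerm⁻¹ * σ * Fin.revPerm) * Fin.revPerm⁻¹ = σ := by group
    exact (bcond_conj_iff _).1 (by rw [this]; exact hσ.2)
  · intro π _
    group
  · intro σ _
    group
  · intro π _
    rw [OC_conj]

end Transfer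
/-- The number of `k`-cycles (orbits of size exactly `k`) of a permutation `π` of `Fin n`. -/
def numKCycles {n : ℕ} (π : Equiv.Perm (Fin n)) (k : ℕ) : ℕ :=
  (Finset.univ.filter (fun i : Fin n =>
    (Finset.univ.filter (fun j : Fin n => π.SameCycle i j)).card = k)).card / k

lemma numKCycles_eq {n : ℕ} (π : Equiv.Perm (Fin n)) (k : ℕ) :
    numKCycles π k = OC π k / k := rfl

set_option maxHeartbeats 2000000 in
/-- For `1 ≤ k` with `n ≥ 2k+3`, the variance (`E[C²] - E[C]²` under the
uniform measure on the `2^(n-1)` b₂-regular permutations of `{1,...,n}`, encoded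
0-based on `Fin n`) of the number `C` of `k`-cycles equals
`((2^(k+1) - 2k + 3)·n + 3k(k-4) + (3-k)·2^(k+1) + 5) / 4^(k+1)`. -/
theorem b2_k_cycle_variance (n k : ℕ) (hk : 1 ≤ k) (hn : 2 * k + 3 ≤ n) :
    ((∑ π ∈ Finset.univ.filter (fun π : Equiv.Perm (Fin n) =>
          ∀ i : Fin n, (i : ℕ) ≤ (π i : ℕ) + 1),
        (numKCycles π k) ^ 2 : ℕ) : ℚ) / 2 ^ (n - 1)
      - (((∑ π ∈ Finset.univ.filter (fun π : Equiv.Perm (Fin n) =>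
            ∀ i : Fin n, (i : ℕ) ≤ (π i : ℕ) + 1),
          numKCycles π k : ℕ) : ℚ) / 2 ^ (n - 1)) ^ 2
      = ((2 ^ (k + 1) - 2 * (k : ℚ) + 3) * n + 3 * k * ((k : ℚ) - 4)
          + (3 - (k : ℚ)) * 2 ^ (k + 1) + 5) / 4 ^ (k + 1) := by
  obtain ⟨K, rfl⟩ : ∃ K, k = K+1 := ⟨k-1, by omega⟩
  obtain ⟨m, rfl⟩ : ∃ m, n = m+1 := ⟨n-1, by omega⟩
  obtain ⟨j, hj⟩ : ∃ j, m = 2*K+2+j := ⟨m-(2*K+2), by omega⟩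
  subst hj
  simp only [Nat.add_sub_cancel]
  have hc0 : ((K+1 : ℕ) : ℚ) ≠ 0 := by push_cast; positivity
  have h1 : ∀ π : Equiv.Perm (Fin (2*K+2+j+1)), ((numKCycles π (K+1) : ℕ) : ℚ)
      = (fun t : ℕ => (t : ℚ) / ((K:ℚ)+1)) (OC π (K+1)) := by
    intro π
    rw [numKCycles_eq, Nat.cast_div (OC_dvd π (K+1)) hc0]
    push_cast
    rfl
  have hS1 : ((∑ π ∈ Finset.univ.filter (fun π : Equiv.Perm (Fin (2*K+2+j+1)) =>
        ∀ i : Fin (2*K+2+j+1), (i : ℕ) ≤ (π i : ℕ) + 1), numKCycles π (K+1) : ℕ) : ℚ)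
      = Aq (K+1) (2*K+2+j) / ((K:ℚ)+1) := by
    push_cast
    rw [Finset.sum_congr rfl (fun π _ => h1 π),
      sum_transfer (K+1) (fun t : ℕ => (t : ℚ) / ((K:ℚ)+1)), ← Finset.sum_div]
    rfl
  have h2 : ∀ π : Equiv.Perm (Fin (2*K+2+j+1)), (((numKCycles π (K+1))^2 : ℕ) : ℚ)
      = (fun t : ℕ => ((t : ℚ))^2 / ((K:ℚ)+1)^2) (OC π (K+1)) := by
    intro π
    push_cast
    rw [show ((numKCycles π (K+1) : ℕ) : ℚ) = _ from h1 π]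
    simp only []
    rw [div_pow]
  have hS2 : ((∑ π ∈ Finset.univ.filter (fun π : Equiv.Perm (Fin (2*K+2+j+1)) =>
        ∀ i : Fin (2*K+2+j+1), (i : ℕ) ≤ (π i : ℕ) + 1), (numKCycles π (K+1))^2 : ℕ) : ℚ)
      = Bq (K+1) (2*K+2+j) / ((K:ℚ)+1)^2 := by
    push_cast
    have hcg : ∀ π : Equiv.Perm (Fin (2*K+2+j+1)),
        ((numKCycles π (K+1) : ℕ) : ℚ)^2
        = (fun t : ℕ => ((t : ℚ))^2 / ((K:ℚ)+1)^2) (OC π (K+1)) := by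
      intro π
      have := h2 π
      push_cast at this
      exact this
    rw [Finset.sum_congr rfl (fun π _ => hcg π),
      sum_transfer (K+1) (fun t : ℕ => ((t : ℚ))^2 / ((K:ℚ)+1)^2), ← Finset.sum_div]
    rfl
  rw [hS1, hS2, Aq_val _ _ (by omega) (by omega), Bq_gen K j, Bgen]
  have h4 : (4:ℚ)^(K+1+1) = 2^(2*K+4) := by
    rw [show (4:ℚ) = 2^2 from by norm_num, ← pow_mul, show 2*(K+1+1) = 2*K+4 from by omega]
  rw [h4]
  push_cast
  field_simp
  ring1
end

section
/- For a permutation π of {1,...,n} with π(i) ≥ i - 1 for i ∈ {2,...,n}, the number of cycles of π equals the number of record positions of π, where i is a record position if π(i) > π(j) for all j < i. -/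
/-- For a permutation `π` of `{1,...,n}` with `π(i) ≥ i - 1` for
`i ∈ {2,...,n}` (encoded 0-based on `Fin n`), the number of cycles of `π` (orbits:
nontrivial cycles, counted by `cycleType`, plus fixed points) equals the number of
record positions of `π`, where `i` is a record position if `π(i) > π(j)` for all `j < i`. -/
theorem b2_cycles_eq_records (n : ℕ) (π : Equiv.Perm (Fin n))
    (hreg : ∀ i : Fin n, (i : ℕ) ≤ (π i : ℕ) + 1) :
    Multiset.card π.cycleType + (Finset.univ.filter (fun i : Fin n => π i = i)).card
      = (Finset.univ.filter (fun i : Fin n => ∀ j : Fin n, j < i → π j < π i)).card := by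
  classical
  -- Pointwise invariance of upper sets {j : i ≤ j} for i with i ≤ π i
  have hT : ∀ i : Fin n, (i : ℕ) ≤ (π i : ℕ) →
      ∀ j : Fin n, (i : ℕ) ≤ (j : ℕ) → (i : ℕ) ≤ (π j : ℕ) := by
    intro i hi j hj
    by_contra h
    push_neg at h
    have h2 := hreg j
    have hji : (j : ℕ) = (i : ℕ) := by omega
    have : j = i := Fin.ext hji
    subst this
    omega
  -- Lower sets {j : j < i} are invariant as well
  have hlow : ∀ i : Fin n, (i : ℕ) ≤ (π i : ℕ) →
      ∀ j : Fin n, (j : ℕ) < (i : ℕ) → (π j : ℕ) < (i : ℕ) := by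
    intro i hi j hj
    by_contra h
    push_neg at h
    set T : Finset (Fin n) := Finset.univ.filter (fun j => (i : ℕ) ≤ (j : ℕ)) with hTdef
    have hsub : T.image π ⊆ T := by
      intro x hx
      rcases Finset.mem_image.mp hx with ⟨k, hk, rfl⟩
      simp only [hTdef, Finset.mem_filter, Finset.mem_univ, true_and] at hk ⊢
      exact hT i hi k hk
    have hcard : T.card ≤ (T.image π).card := by
      rw [Finset.card_image_of_injective _ π.injective]
    have heq : T.image π = T := Finset.eq_of_subset_of_card_le hsub hcard
    have hmem : π j ∈ T := by
      simp only [hTdef, Finset.mem_filter, Finset.mem_univ, true_and]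
      exact h
    rw [← heq] at hmem
    rcases Finset.mem_image.mp hmem with ⟨k, hk, hkj⟩
    have : k = j := π.injective hkj
    subst this
    simp only [hTdef, Finset.mem_filter, Finset.mem_univ, true_and] at hk
    omega
  -- Record positions are exactly {i : i ≤ π i}
  have hrec : ∀ i : Fin n, (∀ j : Fin n, j < i → π j < π i) ↔ (i : ℕ) ≤ (π i : ℕ) := by
    intro i
    constructor
    · intro hR
      by_contra h
      push_neg at h
      have hsub : (Finset.Iio i).image π ⊆ Finset.Iio (π i) := by
        intro x hx
        rcases Finset.mem_image.mp hx with ⟨k, hk, rfl⟩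
        exact Finset.mem_Iio.mpr (hR k (Finset.mem_Iio.mp hk))
      have := Finset.card_le_card hsub
      rw [Finset.card_image_of_injective _ π.injective, Fin.card_Iio, Fin.card_Iio] at this
      omega
    · intro hi j hj
      have hj' : (j : ℕ) < (i : ℕ) := hj
      have := hlow i hi j hj'
      exact Fin.lt_def.mpr (lt_of_lt_of_le this hi)
  -- Minimality along cycles
  have hminpow : ∀ i : Fin n, (i : ℕ) ≤ (π i : ℕ) → ∀ k : ℕ, (i : ℕ) ≤ (((π ^ k) i : Fin n) : ℕ) := by
    intro i hi k
    induction k with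
    | zero => simp
    | succ m ih =>
        have : (π ^ (m + 1)) i = π ((π ^ m) i) := by
          rw [pow_succ']
          rfl
        rw [this]
        exact hT i hi _ ih
  have hmin : ∀ i : Fin n, (i : ℕ) ≤ (π i : ℕ) → ∀ j : Fin n, π.SameCycle i j → (i : ℕ) ≤ (j : ℕ) := by
    intro i hi j hsc
    obtain ⟨k, -, -, hk⟩ := hsc.exists_pow_eq π
    rw [← hk]
    exact hminpow i hi k
  -- Counting
  have hLHS : Multiset.card π.cycleType = π.cycleFactorsFinset.card := by
    rw [Equiv.Perm.cycleType_def, Multiset.card_map]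
    rfl
  rw [hLHS]
  have hRHS : (Finset.univ.filter (fun i : Fin n => ∀ j : Fin n, j < i → π j < π i))
      = Finset.univ.filter (fun i : Fin n => (i : ℕ) ≤ (π i : ℕ)) := by
    apply Finset.filter_congr
    intro i _
    exact hrec i
  rw [hRHS]
  -- split M into fixed points and moved minima
  set M := Finset.univ.filter (fun i : Fin n => (i : ℕ) ≤ (π i : ℕ)) with hM
  set Mm := Finset.univ.filter (fun i : Fin n => (i : ℕ) ≤ (π i : ℕ) ∧ π i ≠ i) with hMm
  have hfix_sub : Finset.univ.filter (fun i : Fin n => π i = i)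
      = M.filter (fun i : Fin n => π i = i) := by
    rw [hM, Finset.filter_filter]
    apply Finset.filter_congr
    intro i _
    constructor
    · intro h; exact ⟨le_of_eq (congrArg _ h.symm), h⟩
    · intro h; exact h.2
  have hMm_eq : Mm = M.filter (fun i : Fin n => ¬ (π i = i)) := by
    rw [hM, hMm, Finset.filter_filter]
  have hsplit : (M.filter (fun i : Fin n => π i = i)).card
      + (M.filter (fun i : Fin n => ¬ (π i = i))).card = M.card :=
    Finset.card_filter_add_card_filter_not (p := fun i : Fin n => π i = i)
  -- bijection between Mm and cycle factors
  have hbij : Mm.card = π.cycleFactorsFinset.card := by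
    apply Finset.card_bij (fun i _ => π.cycleOf i)
    · intro i hi
      rw [hMm] at hi
      simp only [Finset.mem_filter, Finset.mem_univ, true_and] at hi
      exact Equiv.Perm.cycleOf_mem_cycleFactorsFinset_iff.mpr
        (Equiv.Perm.mem_support.mpr hi.2)
    · intro i₁ hi₁ i₂ hi₂ hcy
      rw [hMm] at hi₁ hi₂
      simp only [Finset.mem_filter, Finset.mem_univ, true_and] at hi₁ hi₂
      have h₂s : i₂ ∈ π.support := Equiv.Perm.mem_support.mpr hi₂.2
      have h₂ : i₂ ∈ (π.cycleOf i₂).support :=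
        Equiv.Perm.mem_support_cycleOf_iff.mpr ⟨Equiv.Perm.SameCycle.refl _ _, h₂s⟩
      rw [← hcy] at h₂
      have hsc : π.SameCycle i₁ i₂ := (Equiv.Perm.mem_support_cycleOf_iff.mp h₂).1
      have h1 := hmin i₁ hi₁.1 i₂ hsc
      have h2 := hmin i₂ hi₂.1 i₁ hsc.symm
      exact Fin.ext (le_antisymm h1 h2)
    · intro c hc
      have hcyc : c.IsCycle := (Equiv.Perm.mem_cycleFactorsFinset_iff.mp hc).1
      have hne : c.support.Nonempty := hcyc.nonempty_support
      set a := c.support.min' hne with ha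
      have haS : a ∈ c.support := c.support.min'_mem hne
      have hca : c = π.cycleOf a := Equiv.Perm.cycle_is_cycleOf haS hc
      have hagree : c a = π a := (Equiv.Perm.mem_cycleFactorsFinset_iff.mp hc).2 a haS
      have hπa_mem : π a ∈ c.support := by
        rw [← hagree]; exact Equiv.Perm.apply_mem_support.mpr haS
      have hale : (a : ℕ) ≤ (π a : ℕ) :=
        Fin.le_def.mp (c.support.min'_le _ hπa_mem)
      have hmove : π a ≠ a := by
        rw [← hagree]
        exact Equiv.Perm.mem_support.mp haS
      refine ⟨a, ?_, hca.symm⟩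
      rw [hMm]
      simp only [Finset.mem_filter, Finset.mem_univ, true_and]
      exact ⟨hale, hmove⟩
  rw [← hbij, hfix_sub, hMm_eq, Nat.add_comm]
  exact hsplit
end

section
/- The number of permutations π of {1,...,n} with π(i) ≥ i - 1 (for i ∈ {2,...,n}) having exactly m cycles equals the binomial coefficient C(n-1, m-1), i.e., the number of compositions of n with exactly m parts. -/
namespace B2P

variable {n : ℕ}

def fcast (hn : 0 < n) (k : ℕ) : Fin n := ⟨k % n, Nat.mod_lt _ hn⟩

lemma fcast_val (hn : 0 < n) {k : ℕ} (hk : k < n) : ((fcast hn k : Fin n) : ℕ) = k :=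
  Nat.mod_eq_of_lt hk

lemma bend_ex (S : Finset ℕ) (hSlt : ∀ s ∈ S, s < n) (i : ℕ) :
    ∃ j, i ≤ j ∧ j + 1 ∉ S :=
  ⟨max i (n - 1), le_max_left _ _, fun h => by have := hSlt _ h; omega⟩

def bend (S : Finset ℕ) (hSlt : ∀ s ∈ S, s < n) (i : ℕ) : ℕ :=
  Nat.find (bend_ex S hSlt i)

variable {S : Finset ℕ} (hSlt : ∀ s ∈ S, s < n)

lemma le_bend (i : ℕ) : i ≤ bend S hSlt i := (Nat.find_spec (bend_ex S hSlt i)).1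

lemma bend_succ_not_mem (i : ℕ) : bend S hSlt i + 1 ∉ S := (Nat.find_spec (bend_ex S hSlt i)).2

lemma bend_lt {i : ℕ} (h : i < n) : bend S hSlt i < n := by
  have h1 : bend S hSlt i ≤ n - 1 :=
    Nat.find_le ⟨by omega, fun hs => by have := hSlt _ hs; omega⟩
  omega

lemma mem_of_le_bend {i k : ℕ} (h1 : i < k) (h2 : k ≤ bend S hSlt i) : k ∈ S := by
  by_contra hk
  have hb : bend S hSlt i = Nat.find (bend_ex S hSlt i) := rfl
  have hmin := Nat.find_min (bend_ex S hSlt i) (m := k - 1) (by omega)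
  push_neg at hmin
  have : k - 1 + 1 = k := by omega
  exact hk (this ▸ hmin (by omega))

lemma bend_eq_of {i b : ℕ} (h1 : i ≤ b) (h2 : b + 1 ∉ S)
    (h3 : ∀ k, i < k → k ≤ b → k ∈ S) : bend S hSlt i = b := by
  have hle : bend S hSlt i ≤ b := Nat.find_le ⟨h1, h2⟩
  rcases eq_or_lt_of_le hle with h | h
  · exact h
  · exact absurd (h3 _ (by have := le_bend hSlt i; omega) (by omega))
      (bend_succ_not_mem hSlt i)

lemma bend_congr {i k : ℕ} (h1 : i ≤ k) (h2 : k ≤ bend S hSlt i) :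
    bend S hSlt k = bend S hSlt i :=
  bend_eq_of hSlt h2 (bend_succ_not_mem hSlt i)
    (fun j hj1 hj2 => mem_of_le_bend hSlt (by omega) hj2)

lemma blocks_disj {a a' : ℕ} (ha' : a' ∉ S) (h : a < a') : bend S hSlt a < a' := by
  by_contra hc
  exact ha' (mem_of_le_bend hSlt h (by omega))

def bmin (S : Finset ℕ) (i : ℕ) : ℕ := Nat.findGreatest (fun a => a ∉ S) i

variable (hS0 : 0 ∉ S)
include hS0

lemma bmin_not_mem (i : ℕ) : bmin S i ∉ S :=
  Nat.findGreatest_spec (P := fun a => a ∉ S) (Nat.zero_le i) hS0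

omit hS0

lemma bmin_le (i : ℕ) : bmin S i ≤ i := Nat.findGreatest_le i

lemma mem_of_bmin_lt {i k : ℕ} (h1 : bmin S i < k) (h2 : k ≤ i) : k ∈ S := by
  have := Nat.findGreatest_is_greatest (P := fun a => a ∉ S) h1 h2
  simpa using this

lemma le_bend_bmin (i : ℕ) : i ≤ bend S hSlt (bmin S i) := by
  by_contra hc
  have h1 : bmin S i ≤ bend S hSlt (bmin S i) := le_bend hSlt _
  exact bend_succ_not_mem hSlt (bmin S i)
    (mem_of_bmin_lt (i := i) (by omega) (by omega))

lemma bmin_eq_self {i : ℕ} (hi : i ∉ S) : bmin S i = i :=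
  le_antisymm (bmin_le i) (Nat.le_findGreatest le_rfl hi)

lemma bmin_lt_of_mem (hS0 : 0 ∉ S) {i : ℕ} (hi : i ∈ S) : bmin S i < i := by
  have h1 := bmin_le (S := S) i
  have h2 := bmin_not_mem hS0 i
  rcases eq_or_lt_of_le h1 with h | h
  · exact absurd hi (by rw [h] at h2; exact h2)
  · exact h


/-! ### Generic list-product lemmas for disjoint permutations -/

lemma prod_apply_of_fixed {β : Type*} (l : List (Equiv.Perm β)) (x : β)
    (h : ∀ τ ∈ l, τ x = x) : l.prod x = x := by
  induction l with
  | nil => simp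
  | cons σ t ih =>
    rw [List.prod_cons, Equiv.Perm.mul_apply, ih (fun τ hτ => h τ (List.mem_cons_of_mem _ hτ))]
    exact h σ List.mem_cons_self

lemma prod_apply_of_mem {β : Type*} (l : List (Equiv.Perm β))
    (hp : l.Pairwise Equiv.Perm.Disjoint) (τ : Equiv.Perm β) (hτ : τ ∈ l) (x : β)
    (hx : τ x ≠ x) : l.prod x = τ x := by
  induction l with
  | nil => simp at hτ
  | cons σ t ih =>
    rw [List.prod_cons, Equiv.Perm.mul_apply]
    rcases List.mem_cons.1 hτ with rfl | hτt
    · have hfix : ∀ g ∈ t, g x = x := by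
        intro g hg
        rcases (List.pairwise_cons.1 hp).1 g hg x with h | h
        · exact absurd h hx
        · exact h
      rw [prod_apply_of_fixed t x hfix]
    · have hd : σ.Disjoint τ := (List.pairwise_cons.1 hp).1 τ hτt
      rw [ih (List.pairwise_cons.1 hp).2 hτt]
      rcases hd (τ x) with h | h
      · exact h
      · exact absurd (τ.injective h) hx

/-! ### Block lists -/

section Blocks

variable (hn : 0 < n)

def blockL (a : ℕ) : List (Fin n) :=
  ((List.range' a (bend S hSlt a + 1 - a)).reverse).map (fcast hn)

lemma length_blockL (a : ℕ) : (blockL hSlt hn a).length = bend S hSlt a + 1 - a := by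
  simp [blockL]

lemma blockL_getElem (a : ℕ) (i : ℕ) (h : i < bend S hSlt a + 1 - a) :
    (blockL hSlt hn a)[i]'(by rw [length_blockL]; exact h) =
      fcast hn (bend S hSlt a - i) := by
  have hab := le_bend hSlt a
  simp only [blockL, List.getElem_map, List.getElem_reverse, List.getElem_range']
  congr 1
  rw [List.length_range']
  omega

lemma mem_blockL_iff {a : ℕ} (ha : a < n) (x : Fin n) :
    x ∈ blockL hSlt hn a ↔ a ≤ (x : ℕ) ∧ (x : ℕ) ≤ bend S hSlt a := by
  have hbn := bend_lt hSlt ha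
  constructor
  · intro hx
    simp only [blockL, List.mem_map, List.mem_reverse, List.mem_range'] at hx
    obtain ⟨k, ⟨i, hi, rfl⟩, rfl⟩ := hx
    rw [fcast_val hn (by omega)]
    omega
  · rintro ⟨h1, h2⟩
    simp only [blockL, List.mem_map, List.mem_reverse, List.mem_range']
    exact ⟨(x : ℕ), ⟨(x : ℕ) - a, by omega, by omega⟩, by ext; exact fcast_val hn x.isLt⟩

lemma nodup_blockL {a : ℕ} (ha : a < n) : (blockL hSlt hn a).Nodup := by
  have hbn := bend_lt hSlt ha
  refine List.Nodup.map_on ?_ (List.nodup_reverse.2 (List.nodup_range' ..))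
  intro x hx y hy hxy
  simp only [List.mem_reverse, List.mem_range'] at hx hy
  obtain ⟨i, hi, rfl⟩ := hx
  obtain ⟨j, hj, rfl⟩ := hy
  have := congrArg Fin.val hxy
  rw [fcast_val hn (by omega), fcast_val hn (by omega)] at this
  omega

lemma formPerm_blockL_apply {a x : ℕ} (ha : a < n) (hx1 : a ≤ x) (hx2 : x ≤ bend S hSlt a) :
    (blockL hSlt hn a).formPerm (fcast hn x) =
      if x = a then fcast hn (bend S hSlt a) else fcast hn (x - 1) := by
  have hbn := bend_lt hSlt ha
  have hlen : (blockL hSlt hn a).length = bend S hSlt a + 1 - a := length_blockL hSlt hn a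
  have hidx : bend S hSlt a - x < bend S hSlt a + 1 - a := by omega
  have hget := blockL_getElem hSlt hn a (bend S hSlt a - x) hidx
  have hxeq : fcast hn x = (blockL hSlt hn a)[bend S hSlt a - x]'(by omega) := by
    rw [hget]; congr 1; omega
  rw [hxeq, List.formPerm_apply_getElem _ (nodup_blockL hSlt hn ha)]
  rcases eq_or_ne x a with rfl | hxa
  · simp only [if_pos rfl, hlen]
    have he : bend S hSlt x - x + 1 = bend S hSlt x + 1 - x := by omega
    rw [he]
    simp only [Nat.mod_self, if_true]
    have h0 := blockL_getElem hSlt hn x 0 (by omega)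
    rw [h0]
    congr 1
  · rw [if_neg hxa]
    have hmod : (bend S hSlt a - x + 1) % (blockL hSlt hn a).length
        = bend S hSlt a - x + 1 := by
      rw [hlen]; exact Nat.mod_eq_of_lt (by omega)
    have := blockL_getElem hSlt hn a (bend S hSlt a - x + 1) (by omega)
    simp only [hmod]
    rw [this]
    congr 1
    omega

lemma formPerm_blockL_apply_not_mem {a : ℕ} {x : Fin n}
    (hx : ¬ (a ≤ (x : ℕ) ∧ (x : ℕ) ≤ bend S hSlt a)) (ha : a < n) :
    (blockL hSlt hn a).formPerm x = x :=
  List.formPerm_apply_of_notMem (by rw [mem_blockL_iff hSlt hn ha]; exact hx)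

end Blocks


/-! ### The permutation associated to a down-step set -/

section PiS

variable (hn : 0 < n)

def theList : List (Equiv.Perm (Fin n)) :=
  (((Finset.range n \ S).sort (· ≤ ·)).filter (fun a => decide (a < bend S hSlt a))).map
    (fun a => (blockL hSlt hn a).formPerm)

def piS : Equiv.Perm (Fin n) := (theList hSlt hn).prod

lemma mem_theList_iff (τ : Equiv.Perm (Fin n)) :
    τ ∈ theList hSlt hn ↔ ∃ a, a < n ∧ a ∉ S ∧ a < bend S hSlt a ∧
      τ = (blockL hSlt hn a).formPerm := by
  simp only [theList, List.mem_map, List.mem_filter, Finset.mem_sort, Finset.mem_sdiff,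
    Finset.mem_range, decide_eq_true_eq]
  constructor
  · rintro ⟨a, ⟨⟨h1, h2⟩, h3⟩, rfl⟩
    exact ⟨a, h1, h2, h3, rfl⟩
  · rintro ⟨a, h1, h2, h3, rfl⟩
    exact ⟨a, ⟨⟨h1, h2⟩, h3⟩, rfl⟩

lemma disj_blocks {a b : ℕ} (ha : a < n) (hb : b < n) (hbS : b ∉ S) (hab : a < b) :
    Equiv.Perm.Disjoint ((blockL hSlt hn a).formPerm) ((blockL hSlt hn b).formPerm) := by
  intro x
  have hd := blocks_disj hSlt hbS hab
  by_cases hx : a ≤ (x : ℕ) ∧ (x : ℕ) ≤ bend S hSlt a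
  · right
    exact formPerm_blockL_apply_not_mem hSlt hn (by omega) hb
  · left
    exact formPerm_blockL_apply_not_mem hSlt hn hx ha

lemma pairwise_theList : (theList hSlt hn).Pairwise Equiv.Perm.Disjoint := by
  refine List.pairwise_map.2 ?_
  have h1 : (((Finset.range n \ S).sort (· ≤ ·)).filter
      (fun a => decide (a < bend S hSlt a))).Pairwise (· < ·) :=
    List.Pairwise.sublist List.filter_sublist (Finset.sortedLT_sort _).pairwise
  refine h1.imp_of_mem ?_
  intro a b hamem hbmem hab
  have ha := (List.mem_filter.1 hamem).1
  have hb := (List.mem_filter.1 hbmem).1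
  rw [Finset.mem_sort, Finset.mem_sdiff, Finset.mem_range] at ha hb
  exact disj_blocks hSlt hn ha.1 hb.1 hb.2 hab

lemma isCycle_of_mem_theList (τ : Equiv.Perm (Fin n)) (hτ : τ ∈ theList hSlt hn) :
    τ.IsCycle := by
  rw [mem_theList_iff] at hτ
  obtain ⟨a, h1, h2, h3, rfl⟩ := hτ
  exact List.isCycle_formPerm (nodup_blockL hSlt hn h1)
    (by rw [length_blockL]; omega)

lemma piS_apply_mem (hS0 : 0 ∉ S) {x : ℕ} (hx : x ∈ S) :
    piS hSlt hn (fcast hn x) = fcast hn (x - 1) := by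
  have hxn : x < n := hSlt _ hx
  have hx0 : x ≠ 0 := fun h => hS0 (h ▸ hx)
  set a := bmin S x with ha
  have haS : a ∉ S := bmin_not_mem hS0 x
  have hax : a < x := bmin_lt_of_mem hS0 hx
  have hxb : x ≤ bend S hSlt a := le_bend_bmin hSlt x
  have han : a < n := by omega
  have hτ : (blockL hSlt hn a).formPerm ∈ theList hSlt hn :=
    (mem_theList_iff hSlt hn _).2 ⟨a, han, haS, by omega, rfl⟩
  have happ : (blockL hSlt hn a).formPerm (fcast hn x) = fcast hn (x - 1) := by
    rw [formPerm_blockL_apply hSlt hn han (by omega) hxb, if_neg (by omega)]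
  rw [← happ]
  refine prod_apply_of_mem _ (pairwise_theList hSlt hn) _ hτ _ ?_
  rw [happ]
  intro h
  have := congrArg Fin.val h
  rw [fcast_val hn (by omega), fcast_val hn hxn] at this
  omega

lemma piS_apply_not_mem {x : ℕ} (hxn : x < n) (hx : x ∉ S) :
    piS hSlt hn (fcast hn x) = fcast hn (bend S hSlt x) := by
  have hxb := le_bend hSlt x
  have hbn := bend_lt hSlt hxn
  rcases eq_or_lt_of_le hxb with heq | hlt
  · rw [← heq]
    refine prod_apply_of_fixed _ _ ?_
    intro τ hτ
    rw [mem_theList_iff] at hτ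
    obtain ⟨a, h1, h2, h3, rfl⟩ := hτ
    refine formPerm_blockL_apply_not_mem hSlt hn ?_ h1
    rintro ⟨g1, g2⟩
    rw [fcast_val hn hxn] at g1 g2
    rcases eq_or_lt_of_le g1 with rfl | hax
    · exact absurd (bend_congr hSlt le_rfl g2 ▸ h3) (by omega)
    · exact hx (mem_of_le_bend hSlt hax g2)
  · have hτ : (blockL hSlt hn x).formPerm ∈ theList hSlt hn :=
      (mem_theList_iff hSlt hn _).2 ⟨x, hxn, hx, hlt, rfl⟩
    have happ : (blockL hSlt hn x).formPerm (fcast hn x) = fcast hn (bend S hSlt x) := by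
      rw [formPerm_blockL_apply hSlt hn hxn le_rfl hxb, if_pos rfl]
    rw [← happ]
    refine prod_apply_of_mem _ (pairwise_theList hSlt hn) _ hτ _ ?_
    rw [happ]
    intro h
    have := congrArg Fin.val h
    rw [fcast_val hn hbn, fcast_val hn hxn] at this
    omega

end PiS


section Count

variable (hn : 0 < n)

lemma length_theList : (theList hSlt hn).length
    = ((Finset.range n \ S).filter (fun a => a < bend S hSlt a)).card := by
  rw [theList, List.length_map]
  have h1 : (((Finset.range n \ S).filter (fun a => a < bend S hSlt a)).val)
      = ((((Finset.range n \ S).sort (· ≤ ·)).filter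
          (fun a => decide (a < bend S hSlt a)) : List ℕ) : Multiset ℕ) := by
    rw [Finset.filter_val, ← Finset.sort_eq (Finset.range n \ S) (· ≤ ·),
      Multiset.filter_coe]
  rw [Finset.card_def, h1, Multiset.coe_card]

lemma card_cycleType_piS : Multiset.card (piS hSlt hn).cycleType
    = ((Finset.range n \ S).filter (fun a => a < bend S hSlt a)).card := by
  have h := Equiv.Perm.cycleType_eq (σ := piS hSlt hn) (theList hSlt hn) rfl
    (isCycle_of_mem_theList hSlt hn) (pairwise_theList hSlt hn)
  rw [h, ← length_theList hSlt hn]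
  simp

lemma fixed_piS_iff (hS0 : 0 ∉ S) (x : Fin n) :
    piS hSlt hn x = x ↔ ((x : ℕ) ∉ S ∧ bend S hSlt (x : ℕ) = (x : ℕ)) := by
  have hx : fcast hn (x : ℕ) = x := Fin.ext (fcast_val hn x.isLt)
  by_cases hmem : (x : ℕ) ∈ S
  · have happ := piS_apply_mem hSlt hn hS0 hmem
    rw [hx] at happ
    have hx0 : (x : ℕ) ≠ 0 := fun h => hS0 (h ▸ hmem)
    rw [happ]
    constructor
    · intro h
      have := congrArg Fin.val h
      rw [fcast_val hn (by have := x.isLt; omega)] at this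
      omega
    · rintro ⟨h1, _⟩
      exact absurd hmem h1
  · have happ := piS_apply_not_mem hSlt hn x.isLt hmem
    rw [hx] at happ
    have hbn := bend_lt hSlt x.isLt
    rw [happ]
    constructor
    · intro h
      have := congrArg Fin.val h
      rw [fcast_val hn hbn] at this
      exact ⟨hmem, this⟩
    · rintro ⟨_, h2⟩
      rw [h2, hx]

lemma card_fixed_piS (hS0 : 0 ∉ S) :
    (Finset.univ.filter (fun i : Fin n => piS hSlt hn i = i)).card
      = ((Finset.range n \ S).filter (fun a => ¬ a < bend S hSlt a)).card := by
  refine Finset.card_bij' (fun x _ => (x : ℕ)) (fun a ha => ⟨a, by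
      simp only [Finset.mem_filter, Finset.mem_sdiff, Finset.mem_range] at ha
      exact ha.1.1⟩) ?_ ?_ ?_ ?_
  · intro x hx
    rw [Finset.mem_filter] at hx
    have h := (fixed_piS_iff hSlt hn hS0 x).1 hx.2
    simp only [Finset.mem_filter, Finset.mem_sdiff, Finset.mem_range]
    have := le_bend hSlt (x : ℕ)
    exact ⟨⟨x.isLt, h.1⟩, by omega⟩
  · intro a ha
    simp only [Finset.mem_filter, Finset.mem_sdiff, Finset.mem_range] at ha
    have hbe : bend S hSlt a = a := by have := le_bend hSlt a; omega
    rw [Finset.mem_filter]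
    refine ⟨Finset.mem_univ _, (fixed_piS_iff hSlt hn hS0 _).2 ?_⟩
    simpa using ⟨ha.1.2, hbe⟩
  · intro x _; exact Fin.ext rfl
  · intro a _; rfl

lemma orbits_piS (hS0 : 0 ∉ S) :
    Multiset.card (piS hSlt hn).cycleType
      + (Finset.univ.filter (fun i : Fin n => piS hSlt hn i = i)).card
      = n - S.card := by
  rw [card_cycleType_piS hSlt hn, card_fixed_piS hSlt hn hS0,
    Finset.card_filter_add_card_filter_not]
  rw [Finset.card_sdiff_of_subset (fun s hs => Finset.mem_range.2 (hSlt s hs)), Finset.card_range]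

lemma piS_cond (hS0 : 0 ∉ S) (i : Fin n) : (i : ℕ) ≤ ((piS hSlt hn i : Fin n) : ℕ) + 1 := by
  have hx : fcast hn (i : ℕ) = i := Fin.ext (fcast_val hn i.isLt)
  by_cases hmem : (i : ℕ) ∈ S
  · have happ := piS_apply_mem hSlt hn hS0 hmem
    rw [hx] at happ
    have hx0 : (i : ℕ) ≠ 0 := fun h => hS0 (h ▸ hmem)
    rw [happ, fcast_val hn (by have := i.isLt; omega)]
    omega
  · have happ := piS_apply_not_mem hSlt hn i.isLt hmem
    rw [hx] at happ
    rw [happ, fcast_val hn (bend_lt hSlt i.isLt)]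
    have := le_bend hSlt (i : ℕ)
    omega

lemma DofPiS (hS0 : 0 ∉ S) (i : Fin n) :
    ((piS hSlt hn i : Fin n) : ℕ) + 1 = (i : ℕ) ↔ (i : ℕ) ∈ S := by
  have hx : fcast hn (i : ℕ) = i := Fin.ext (fcast_val hn i.isLt)
  by_cases hmem : (i : ℕ) ∈ S
  · have happ := piS_apply_mem hSlt hn hS0 hmem
    rw [hx] at happ
    have hx0 : (i : ℕ) ≠ 0 := fun h => hS0 (h ▸ hmem)
    rw [happ, fcast_val hn (by have := i.isLt; omega)]
    simp only [hmem, iff_true]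
    omega
  · have happ := piS_apply_not_mem hSlt hn i.isLt hmem
    rw [hx] at happ
    rw [happ, fcast_val hn (bend_lt hSlt i.isLt)]
    have := le_bend hSlt (i : ℕ)
    simp only [hmem, iff_false]
    omega

lemma eq_piS (hS0 : 0 ∉ S) (π : Equiv.Perm (Fin n))
    (hcond : ∀ i : Fin n, (i : ℕ) ≤ (π i : ℕ) + 1)
    (hD : ∀ i : Fin n, ((π i : ℕ) + 1 = (i : ℕ)) ↔ (i : ℕ) ∈ S) :
    π = piS hSlt hn := by
  have hgeA : ∀ i : Fin n, (i : ℕ) ∉ S → bend S hSlt (i : ℕ) ≤ (π i : ℕ) := by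
    intro i hi
    have h1 : (i : ℕ) ≤ (π i : ℕ) := by
      have hc := hcond i
      have hne : ¬((π i : ℕ) + 1 = (i : ℕ)) := fun h => hi ((hD i).1 h)
      omega
    have h2 : ((π i : ℕ) + 1) ∉ S := by
      intro hmem
      have hlt : (π i : ℕ) + 1 < n := hSlt _ hmem
      set y : Fin n := ⟨(π i : ℕ) + 1, hlt⟩ with hy
      have hyv : (π y : ℕ) + 1 = (y : ℕ) := (hD y).2 hmem
      have hπy : π y = π i := Fin.ext (by simp only [hy] at hyv ⊢; omega)
      have : y = i := π.injective hπy
      have := congrArg Fin.val this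
      simp only [hy] at this
      omega
    exact Nat.find_le ⟨h1, h2⟩
  have hSval : ∀ i : Fin n, (i : ℕ) ∈ S → (π i : ℕ) = (i : ℕ) - 1 := by
    intro i hi
    have := (hD i).2 hi
    omega
  have hpiSval : ∀ i : Fin n, (i : ℕ) ∈ S → ((piS hSlt hn i : Fin n) : ℕ) = (i : ℕ) - 1 := by
    intro i hi
    have := (DofPiS hSlt hn hS0 i).2 hi
    omega
  have hpiSA : ∀ i : Fin n, (i : ℕ) ∉ S →
      ((piS hSlt hn i : Fin n) : ℕ) = bend S hSlt (i : ℕ) := by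
    intro i hi
    have hx : fcast hn (i : ℕ) = i := Fin.ext (fcast_val hn i.isLt)
    have happ := piS_apply_not_mem hSlt hn i.isLt hi
    rw [hx] at happ
    rw [happ, fcast_val hn (bend_lt hSlt i.isLt)]
  -- sum argument
  have hsum : ∀ σ : Equiv.Perm (Fin n),
      ∑ i ∈ Finset.univ.filter (fun i : Fin n => (i : ℕ) ∉ S), ((σ i : Fin n) : ℕ)
        + ∑ i ∈ Finset.univ.filter (fun i : Fin n => ¬ (i : ℕ) ∉ S), ((σ i : Fin n) : ℕ)
      = ∑ i : Fin n, (i : ℕ) := by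
    intro σ
    rw [Finset.sum_filter_add_sum_filter_not]
    exact Equiv.sum_comp σ (fun i : Fin n => (i : ℕ))
  have hSsum : ∑ i ∈ Finset.univ.filter (fun i : Fin n => ¬ (i : ℕ) ∉ S), ((π i : Fin n) : ℕ)
      = ∑ i ∈ Finset.univ.filter (fun i : Fin n => ¬ (i : ℕ) ∉ S),
          ((piS hSlt hn i : Fin n) : ℕ) := by
    refine Finset.sum_congr rfl ?_
    intro i hi
    rw [Finset.mem_filter] at hi
    have hiS : (i : ℕ) ∈ S := not_not.1 hi.2
    rw [hSval i hiS, hpiSval i hiS]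
  have hAsum : ∑ i ∈ Finset.univ.filter (fun i : Fin n => (i : ℕ) ∉ S), ((π i : Fin n) : ℕ)
      = ∑ i ∈ Finset.univ.filter (fun i : Fin n => (i : ℕ) ∉ S),
          ((piS hSlt hn i : Fin n) : ℕ) := by
    have h1 := hsum π
    have h2 := hsum (piS hSlt hn)
    omega
  have hpw : ∀ i ∈ Finset.univ.filter (fun i : Fin n => (i : ℕ) ∉ S),
      ((piS hSlt hn i : Fin n) : ℕ) ≤ ((π i : Fin n) : ℕ) := by
    intro i hi
    rw [Finset.mem_filter] at hi
    rw [hpiSA i hi.2]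
    exact hgeA i hi.2
  have heq := (Finset.sum_eq_sum_iff_of_le hpw).1 hAsum.symm
  ext i
  by_cases hmem : (i : ℕ) ∈ S
  · rw [hSval i hmem, hpiSval i hmem]
  · exact ((heq i (Finset.mem_filter.2 ⟨Finset.mem_univ _, hmem⟩)).symm : _)

end Count


end B2P

open B2P

/-- The number of permutations `π` of `{1,...,n}` with `π(i) ≥ i - 1`
for `i ∈ {2,...,n}` (encoded 0-based on `Fin n`) having exactly `m` cycles (orbits:
nontrivial cycles, counted by `cycleType`, plus fixed points) equals the binomial
coefficient `C(n-1, m-1)`, the number of compositions of `n` with exactly `m` parts. -/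
theorem b2_count_by_number_of_cycles (n m : ℕ) (hn : 1 ≤ n) (hm : 1 ≤ m) :
    (Finset.univ.filter (fun π : Equiv.Perm (Fin n) =>
        (∀ i : Fin n, (i : ℕ) ≤ (π i : ℕ) + 1) ∧
        Multiset.card π.cycleType
          + (Finset.univ.filter (fun i : Fin n => π i = i)).card = m)).card
      = Nat.choose (n - 1) (m - 1) := by
  classical
  have hn0 : 0 < n := hn
  by_cases hmn : m ≤ n
  · -- main case
    -- orbit-count bound abbreviations
    have hchoose : Nat.choose (n - 1) (m - 1) = Nat.choose (n - 1) (n - m) := by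
      rw [← Nat.choose_symm (show m - 1 ≤ n - 1 by omega)]
      congr 1
      omega
    have hT : (Finset.powersetCard (n - m)
        ((Finset.univ : Finset (Fin n)).erase ⟨0, hn0⟩)).card = Nat.choose (n - 1) (n - m) := by
      rw [Finset.card_powersetCard, Finset.card_erase_of_mem (Finset.mem_univ _),
        Finset.card_univ, Fintype.card_fin]
    rw [hchoose, ← hT]
    refine Finset.card_bij'
      (i := fun π _ => Finset.univ.filter (fun j : Fin n => ((π j : ℕ) + 1 = (j : ℕ))))
      (t := Finset.powersetCard (n - m) ((Finset.univ : Finset (Fin n)).erase ⟨0, hn0⟩))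
      (j := fun E _ => piS (S := E.image Fin.val)
        (fun s hs => by obtain ⟨j, _, rfl⟩ := Finset.mem_image.1 hs; exact j.isLt) hn0)
      ?_ ?_ ?_ ?_
    · -- hi : image finset lands in powersetCard
      intro π hπ
      rw [Finset.mem_filter] at hπ
      obtain ⟨-, hcond, horb⟩ := hπ
      set Dπ := Finset.univ.filter (fun j : Fin n => ((π j : ℕ) + 1 = (j : ℕ))) with hDπ
      set Sπ := Dπ.image Fin.val with hSπ
      have hSlt : ∀ s ∈ Sπ, s < n := fun s hs => by
        obtain ⟨j, _, rfl⟩ := Finset.mem_image.1 hs; exact j.isLt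
      have hS0 : 0 ∉ Sπ := by
        intro h
        obtain ⟨j, hj, hv⟩ := Finset.mem_image.1 h
        rw [Finset.mem_filter] at hj
        omega
      have hD : ∀ i : Fin n, ((π i : ℕ) + 1 = (i : ℕ)) ↔ (i : ℕ) ∈ Sπ := by
        intro i
        constructor
        · intro h
          exact Finset.mem_image.2 ⟨i, Finset.mem_filter.2 ⟨Finset.mem_univ _, h⟩, rfl⟩
        · intro h
          obtain ⟨j, hj, hv⟩ := Finset.mem_image.1 h
          rw [Finset.mem_filter] at hj
          have : j = i := Fin.ext hv
          rw [← this]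
          exact hj.2
      have hπeq : π = piS hSlt hn0 := eq_piS hSlt hn0 hS0 π hcond hD
      have hcards : Sπ.card = Dπ.card := Finset.card_image_of_injective _ Fin.val_injective
      have hScard : Sπ.card ≤ n := by
        have h1 : Sπ ⊆ Finset.range n := fun s hs => Finset.mem_range.2 (hSlt s hs)
        have := Finset.card_le_card h1
        rwa [Finset.card_range] at this
      have horb2 : n - Sπ.card = m := by
        rw [hπeq] at horb
        rw [← horb]
        exact (orbits_piS hSlt hn0 hS0).symm
      rw [Finset.mem_powersetCard]
      constructor
      · intro j hj
        rw [Finset.mem_filter] at hj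
        refine Finset.mem_erase.2 ⟨?_, Finset.mem_univ _⟩
        intro h
        have h0 : (j : ℕ) = 0 := by rw [h]
        omega
      · rw [← hcards]
        omega
    · -- hj : piS of a subset lands in the filter
      intro E hE
      rw [Finset.mem_powersetCard] at hE
      obtain ⟨hEsub, hEcard⟩ := hE
      have hSlt : ∀ s ∈ E.image Fin.val, s < n := fun s hs => by
        obtain ⟨j, _, rfl⟩ := Finset.mem_image.1 hs; exact j.isLt
      have hS0 : 0 ∉ E.image Fin.val := by
        intro h
        obtain ⟨j, hj, hv⟩ := Finset.mem_image.1 h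
        have := Finset.mem_erase.1 (hEsub hj)
        exact this.1 (Fin.ext hv)
      have hScard : (E.image Fin.val).card = n - m := by
        rw [Finset.card_image_of_injective _ Fin.val_injective, hEcard]
      rw [Finset.mem_filter]
      refine ⟨Finset.mem_univ _, fun i => piS_cond hSlt hn0 hS0 i, ?_⟩
      rw [orbits_piS hSlt hn0 hS0, hScard]
      omega
    · -- left inverse
      intro π hπ
      rw [Finset.mem_filter] at hπ
      obtain ⟨-, hcond, horb⟩ := hπ
      have hSlt : ∀ s ∈ (Finset.univ.filter
          (fun j : Fin n => ((π j : ℕ) + 1 = (j : ℕ)))).image Fin.val, s < n := fun s hs => by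
        obtain ⟨j, _, rfl⟩ := Finset.mem_image.1 hs; exact j.isLt
      have hS0 : 0 ∉ (Finset.univ.filter
          (fun j : Fin n => ((π j : ℕ) + 1 = (j : ℕ)))).image Fin.val := by
        intro h
        obtain ⟨j, hj, hv⟩ := Finset.mem_image.1 h
        rw [Finset.mem_filter] at hj
        omega
      have hD : ∀ i : Fin n, ((π i : ℕ) + 1 = (i : ℕ)) ↔ (i : ℕ) ∈ (Finset.univ.filter
          (fun j : Fin n => ((π j : ℕ) + 1 = (j : ℕ)))).image Fin.val := by
        intro i
        constructor
        · intro h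
          exact Finset.mem_image.2 ⟨i, Finset.mem_filter.2 ⟨Finset.mem_univ _, h⟩, rfl⟩
        · intro h
          obtain ⟨j, hj, hv⟩ := Finset.mem_image.1 h
          rw [Finset.mem_filter] at hj
          have : j = i := Fin.ext hv
          rw [← this]
          exact hj.2
      exact (eq_piS hSlt hn0 hS0 π hcond hD).symm
    · -- right inverse
      intro E hE
      rw [Finset.mem_powersetCard] at hE
      obtain ⟨hEsub, hEcard⟩ := hE
      have hSlt : ∀ s ∈ E.image Fin.val, s < n := fun s hs => by
        obtain ⟨j, _, rfl⟩ := Finset.mem_image.1 hs; exact j.isLt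
      have hS0 : 0 ∉ E.image Fin.val := by
        intro h
        obtain ⟨j, hj, hv⟩ := Finset.mem_image.1 h
        have := Finset.mem_erase.1 (hEsub hj)
        exact this.1 (Fin.ext hv)
      ext j
      rw [Finset.mem_filter]
      rw [DofPiS hSlt hn0 hS0 j]
      constructor
      · rintro ⟨-, h⟩
        obtain ⟨j', hj', hv⟩ := Finset.mem_image.1 h
        rwa [Fin.val_injective hv] at hj'
      · intro h
        exact ⟨Finset.mem_univ _, Finset.mem_image.2 ⟨j, h, rfl⟩⟩
  · -- degenerate case m > n
    rw [Nat.choose_eq_zero_of_lt (by omega), Finset.card_eq_zero]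
    rw [Finset.eq_empty_iff_forall_notMem]
    intro π hπ
    rw [Finset.mem_filter] at hπ
    obtain ⟨-, -, horb⟩ := hπ
    have h2 : ∀ x ∈ π.cycleType, 1 ≤ x := fun x hx =>
      le_of_lt (Equiv.Perm.one_lt_of_mem_cycleType hx)
    have hcs : Multiset.card π.cycleType ≤ π.cycleType.sum := by
      have := Multiset.card_nsmul_le_sum h2
      simpa using this
    have hsum : π.cycleType.sum = π.support.card := Equiv.Perm.sum_cycleType π
    have hsplit : π.support.card
        + (Finset.univ.filter (fun i : Fin n => π i = i)).card = n := by
      have h1 : π.support = Finset.univ.filter (fun i : Fin n => ¬ π i = i) := by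
        ext i
        simp [Equiv.Perm.mem_support]
      have h3 := Finset.card_filter_add_card_filter_not
        (s := (Finset.univ : Finset (Fin n))) (p := fun i : Fin n => π i = i)
      rw [Finset.card_univ, Fintype.card_fin] at h3
      have h4 := congrArg Finset.card h1
      omega
    omega
end
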